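/- arXiv:1801.07597 — 8 statements merged into one kernel-verified Lean document; each statement's English description precedes it below -/
import Mathlib

section
/- Let $a_1,\ldots,a_n$ and $b_1,\ldots,b_n$ be real numbers with the $b_i$ distinct. Then the function $h(t) = a_1 t^{b_1} + \cdots + a_n t^{b_n}$ on $(0,\infty)$ is either identically zero or has at most $n-1$ zeroes in $(0,\infty)$. -/
/-!
Dividing by `t ^ b₀` turns one exponent into `0` without moving the zeroes in `(0, ∞)`;
differentiating then kills that term and leaves a sum of `n - 1` powers with distinct exponents.
By Rolle's theorem a function has at most one more zero than its derivative on an interval,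
and it is constant there if its derivative vanishes identically, so induction on `n` applies.
-/

open Real Set

theorem encard_zeros_le_encard_zeros_deriv_add_one {f f' : ℝ → ℝ} {s : Set ℝ}
    (hs : s.OrdConnected) (hf : ∀ x ∈ s, HasDerivAt f (f' x) x) :
    {x ∈ s | f x = 0}.encard ≤ {x ∈ s | f' x = 0}.encard + 1 := by
  have interleaved (T S : Finset ℝ) (hT : ↑T ⊆ {x ∈ s | f x = 0})
      (hS : {x ∈ s | f' x = 0} ⊆ ↑S) : T.card ≤ S.card + 1 := by
    refine Finset.card_le_of_interleaved fun x hx y hy hxy _ => ?_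
    obtain ⟨hxs, hfx⟩ := hT hx
    obtain ⟨hys, hfy⟩ := hT hy
    have hIcc : Icc x y ⊆ s := hs.out hxs hys
    obtain ⟨c, hc, hf'c⟩ := exists_hasDerivAt_eq_zero hxy
      (fun z hz => (hf z (hIcc hz)).continuousAt.continuousWithinAt) (hfx.trans hfy.symm)
      (fun z hz => hf z (hIcc (Ioo_subset_Icc_self hz)))
    exact ⟨c, hS ⟨hIcc (Ioo_subset_Icc_self hc), hf'c⟩, hc⟩
  obtain hS | hS := {x ∈ s | f' x = 0}.finite_or_infinite
  swap
  · simp [hS.encard_eq]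
  have hZ : {x ∈ s | f x = 0}.Finite := by
    by_contra hZ
    obtain ⟨T, hT, hTcard⟩ := Set.Infinite.exists_subset_card_eq hZ (hS.toFinset.card + 2)
    have := interleaved T hS.toFinset hT (by simp)
    omega
  rw [hZ.encard_eq_coe_toFinset_card, hS.encard_eq_coe_toFinset_card]
  exact_mod_cast interleaved _ _ (by simp) (by simp)

theorem eq_zero_or_encard_zeros_lt_succ_of_hasDerivAt {f f' : ℝ → ℝ} {s : Set ℝ} {n : ℕ}
    (hs : IsOpen s) (hs' : s.OrdConnected) (hf : ∀ x ∈ s, HasDerivAt f (f' x) x)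
    (hf' : (∀ x ∈ s, f' x = 0) ∨ {x ∈ s | f' x = 0}.encard < n) :
    (∀ x ∈ s, f x = 0) ∨ {x ∈ s | f x = 0}.encard < n + 1 := by
  obtain hf'0 | hf'n := hf'
  · have hconst {x y : ℝ} (hx : x ∈ s) (hy : y ∈ s) : f x = f y :=
      hs.is_const_of_deriv_eq_zero hs'.isPreconnected
        (fun z hz => (hf z hz).differentiableAt.differentiableWithinAt)
        (fun z hz => by simp [(hf z hz).deriv, hf'0 z hz]) hx hy
    obtain hempty | ⟨y, hy, hfy⟩ := {x ∈ s | f x = 0}.eq_empty_or_nonempty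
    · exact .inr (by simp [hempty])
    · exact .inl fun x hx => (hconst hx hy).trans hfy
  · right
    calc {x ∈ s | f x = 0}.encard ≤ {x ∈ s | f' x = 0}.encard + 1 :=
          encard_zeros_le_encard_zeros_deriv_add_one hs' hf
      _ < n + 1 := (ENat.add_lt_add_iff_right ENat.one_ne_top).2 hf'n

noncomputable def rpowSum {n : ℕ} (a b : Fin n → ℝ) (t : ℝ) : ℝ :=
  ∑ i, a i * t ^ b i

theorem hasDerivAt_rpowSum {n : ℕ} (a b : Fin n → ℝ) {t : ℝ} (ht : 0 < t) :
    HasDerivAt (rpowSum a b) (rpowSum (a * b) (b - 1) t) t := by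
  unfold rpowSum
  refine (HasDerivAt.fun_sum fun i _ =>
    (hasDerivAt_rpow_const (p := b i) (.inl ht.ne')).const_mul (a i)).congr_deriv ?_
  simp only [Pi.mul_apply, Pi.sub_apply, Pi.one_apply, mul_assoc]

theorem rpowSum_sub_const {n : ℕ} (a b : Fin n → ℝ) (c : ℝ) {t : ℝ} (ht : 0 < t) :
    rpowSum a (fun i => b i - c) t = rpowSum a b t / t ^ c := by
  simp only [rpowSum, Finset.sum_div, rpow_sub ht, mul_div_assoc]

theorem rpowSum_eq_rpowSum_tail {n : ℕ} (a b : Fin (n + 1) → ℝ) (ha : a 0 = 0) :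
    rpowSum a b = rpowSum (Fin.tail a) (Fin.tail b) := by
  ext t
  simp [rpowSum, Fin.sum_univ_succ, ha, Fin.tail]

theorem rpowSum_eq_zero_or_encard_zeros_lt {n : ℕ} (a b : Fin n → ℝ) (hb : b.Injective) :
    (∀ t ∈ Ioi 0, rpowSum a b t = 0) ∨ {t ∈ Ioi 0 | rpowSum a b t = 0}.encard < n := by
  induction n with
  | zero => exact .inl fun t _ => by simp [rpowSum]
  | succ n ih =>
    set b' : Fin (n + 1) → ℝ := fun i => b i - b 0
    have hzeros (t : ℝ) (ht : t ∈ Ioi 0) : rpowSum a b t = 0 ↔ rpowSum a b' t = 0 := by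
      rw [rpowSum_sub_const a b _ ht, div_eq_zero_iff, or_iff_left (rpow_pos_of_pos ht _).ne']
    have hderiv (t : ℝ) (ht : t ∈ Ioi 0) : HasDerivAt (rpowSum a b')
        (rpowSum (Fin.tail (a * b')) (Fin.tail (b' - 1)) t) t := by
      rw [← rpowSum_eq_rpowSum_tail _ _ (by simp [b'])]
      exact hasDerivAt_rpowSum a b' ht
    have htail : (Fin.tail (b' - 1)).Injective := fun i j hij =>
      Fin.succ_injective _ (hb (by simpa [b', Fin.tail] using hij))
    have hshifted := eq_zero_or_encard_zeros_lt_succ_of_hasDerivAt isOpen_Ioi ordConnected_Ioi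
      hderiv (ih _ _ htail)
    rw [Set.sep_ext_iff.2 hzeros, Nat.cast_succ]
    exact hshifted.imp_left fun hzero t ht => (hzeros t ht).2 (hzero t ht)

/-- A generalized polynomial `h t = ∑ aᵢ t^{bᵢ}` with distinct real exponents is either
identically zero on `(0,∞)` or has at most `n-1` zeroes in `(0,∞)`. -/
theorem stmt_0 (n : ℕ) (a b : Fin n → ℝ) (hb : Function.Injective b)
    (h : ℝ → ℝ) (hh : ∀ t, h t = ∑ i, a i * t ^ (b i)) :
    (∀ t ∈ Set.Ioi (0:ℝ), h t = 0) ∨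
      ∃ S : Finset ℝ, S.card ≤ n - 1 ∧ ∀ t ∈ Set.Ioi (0:ℝ), h t = 0 → t ∈ S := by
  obtain rfl : h = rpowSum a b := funext hh
  refine (rpowSum_eq_zero_or_encard_zeros_lt a b hb).imp_right fun hlt => ?_
  have hfin : {t ∈ Ioi 0 | rpowSum a b t = 0}.Finite := finite_of_encard_le_coe hlt.le
  refine ⟨hfin.toFinset, ?_, fun t ht h0 => hfin.mem_toFinset.2 ⟨ht, h0⟩⟩
  rw [hfin.encard_eq_coe_toFinset_card] at hlt
  exact Nat.le_sub_one_of_lt (by exact_mod_cast hlt)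
end

section
/- For any real numbers $p_1 < p_2 < \cdots < p_n$ and $0 < t_1 < t_2 < \cdots < t_n$, the determinant of the generalized Vandermonde matrix $A = (t_i^{p_j})_{i,j=1}^n$ is strictly positive. -/
/-!
An exponential sum `∑ⱼ cⱼ x^{pⱼ}` with `n` distinct exponents has at most `n - 1` positive
zeros: divide by `x^{p₀}`, differentiate, and apply Rolle's theorem between consecutive zeros to
get an exponential sum with `n - 1` terms and `n - 1` zeros. Hence `det (tᵢ^{pⱼ})` never vanishes
on the convex set of admissible `(p, t)`, so its sign is constant there; at `pⱼ = j`, `tᵢ = i + 1`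
it is an ordinary Vandermonde determinant, which is positive.
-/

open Real Set

theorem convex_setOf_strictMono {𝕜 ι β : Type*} [Semiring 𝕜] [PartialOrder 𝕜] [PartialOrder ι]
    [AddCommMonoid β] [PartialOrder β] [IsOrderedCancelAddMonoid β] [Module 𝕜 β]
    [PosSMulStrictMono 𝕜 β] :
    Convex 𝕜 {f : ι → β | StrictMono f} := by
  intro f (hf : StrictMono f) g (hg : StrictMono g) a b ha hb hab
  obtain rfl | ha' := ha.eq_or_lt
  · rw [zero_add] at hab
    simpa [hab] using hg
  intro i j hij
  simpa using add_lt_add_of_lt_of_le (smul_lt_smul_of_pos_left (hf hij) ha')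
    (smul_le_smul_of_nonneg_left (hg.monotone hij.le) hb)

theorem Matrix.det_vandermonde_pos {R : Type*} [CommRing R] [LinearOrder R] [IsStrictOrderedRing R]
    {n : ℕ} {v : Fin n → R} (hv : StrictMono v) : 0 < (Matrix.vandermonde v).det := by
  rw [Matrix.det_vandermonde]
  exact Finset.prod_pos fun i _ => Finset.prod_pos fun j hj =>
    sub_pos.2 (hv (Finset.mem_Ioi.1 hj))

theorem IsPreconnected.pos_of_pos_of_ne_zero {X : Type*} [TopologicalSpace X] {s : Set X}
    (hs : IsPreconnected s) {f : X → ℝ} (hf : ContinuousOn f s) (hne : ∀ x ∈ s, f x ≠ 0)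
    {a b : X} (ha : a ∈ s) (hb : b ∈ s) (hfb : 0 < f b) : 0 < f a := by
  by_contra! hfa
  obtain ⟨x, hx, hfx⟩ := hs.intermediate_value ha hb hf ⟨hfa, hfb.le⟩
  exact hne x hx hfx

theorem exists_strictMono_deriv_eq_zero {k : ℕ} {f : ℝ → ℝ} {t : Fin (k + 1) → ℝ}
    (ht : StrictMono t) (hf : ContinuousOn f (Icc (t 0) (t (Fin.last k))))
    (hzero : ∀ i, f (t i) = 0) :
    ∃ s : Fin k → ℝ, StrictMono s ∧
      ∀ i, s i ∈ Ioo (t i.castSucc) (t i.succ) ∧ deriv f (s i) = 0 := by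
  have hroot : ∀ i : Fin k, ∃ x ∈ Ioo (t i.castSucc) (t i.succ), deriv f x = 0 := fun i =>
    exists_deriv_eq_zero (ht i.castSucc_lt_succ)
      (hf.mono (Icc_subset_Icc (ht.monotone (Fin.zero_le _)) (ht.monotone (Fin.le_last _))))
      (by rw [hzero, hzero])
  choose s hs hs0 using hroot
  refine ⟨s, fun i j hij => ?_, fun i => ⟨hs i, hs0 i⟩⟩
  calc s i < t i.succ := (hs i).2
    _ ≤ t j.castSucc := ht.monotone (Fin.succ_le_castSucc_iff.2 hij)
    _ < s j := (hs j).1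

theorem hasDerivAt_sum_mul_rpow {ι : Type*} [Fintype ι] (c q : ι → ℝ) {x : ℝ} (hx : 0 < x) :
    HasDerivAt (fun y => ∑ j, c j * y ^ q j) (∑ j, c j * (q j * x ^ (q j - 1))) x :=
  HasDerivAt.fun_sum fun j _ => (hasDerivAt_rpow_const (Or.inl hx.ne')).const_mul (c j)

theorem continuousOn_sum_mul_rpow {ι : Type*} [Fintype ι] (c q : ι → ℝ) :
    ContinuousOn (fun y => ∑ j, c j * y ^ q j) (Ioi 0) := fun _ hx =>
  (hasDerivAt_sum_mul_rpow c q hx).continuousAt.continuousWithinAt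

theorem eq_zero_of_sum_mul_rpow_eq_zero {k : ℕ} {p t c : Fin k → ℝ} (hp : Function.Injective p)
    (ht : StrictMono t) (ht0 : ∀ i, 0 < t i) (h : ∀ i, ∑ j, c j * t i ^ p j = 0) : c = 0 := by
  induction k with
  | zero => exact Subsingleton.elim _ _
  | succ k ih =>
    set g : ℝ → ℝ := fun y => ∑ j, c j * y ^ (p j - p 0)
    have hg : ∀ i, g (t i) = 0 := fun i => by
      simp only [g, rpow_sub (ht0 i), mul_div_assoc', ← Finset.sum_div, h i, zero_div]
    obtain ⟨s, hs, hsg⟩ := exists_strictMono_deriv_eq_zero ht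
      ((continuousOn_sum_mul_rpow _ _).mono fun x hx => (ht0 0).trans_le hx.1) hg
    have hspos : ∀ i, 0 < s i := fun i => (ht0 _).trans (hsg i).1.1
    -- the `j = 0` term of `g` is constant, so `g'` is an exponential sum with `k` terms
    have hsucc : (fun j : Fin k => c j.succ * (p j.succ - p 0)) = 0 := by
      refine ih (p := fun j => p j.succ - p 0 - 1) (fun a b hab => ?_) hs hspos fun i => ?_
      · simpa using hp (sub_left_injective (sub_left_injective hab))
      · rw [← (hsg i).2, (hasDerivAt_sum_mul_rpow _ _ (hspos i)).deriv, Fin.sum_univ_succ]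
        simp [mul_assoc]
    have hcsucc : ∀ j : Fin k, c j.succ = 0 := fun j =>
      (mul_eq_zero.1 (congrFun hsucc j)).resolve_right
        (sub_ne_zero.2 (hp.ne (Fin.succ_ne_zero j)))
    have hc0 : c 0 = 0 := by
      have h0 := h 0
      simp only [Fin.sum_univ_succ, hcsucc, zero_mul, Finset.sum_const_zero, add_zero] at h0
      exact (mul_eq_zero.1 h0).resolve_right (rpow_pos_of_pos (ht0 0) _).ne'
    funext j
    exact Fin.cases hc0 hcsucc j

noncomputable def rpowVandermonde {n : ℕ} (p t : Fin n → ℝ) : Matrix (Fin n) (Fin n) ℝ :=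
  Matrix.of fun i j => t i ^ p j

theorem det_rpowVandermonde_ne_zero {n : ℕ} {p t : Fin n → ℝ} (hp : Function.Injective p)
    (ht : StrictMono t) (ht0 : ∀ i, 0 < t i) : (rpowVandermonde p t).det ≠ 0 := by
  intro hdet
  obtain ⟨c, hc, hAc⟩ := Matrix.exists_mulVec_eq_zero_iff.2 hdet
  refine hc (eq_zero_of_sum_mul_rpow_eq_zero hp ht ht0 fun i => ?_)
  simpa [rpowVandermonde, Matrix.mulVec, dotProduct, mul_comm] using congrFun hAc i

theorem rpowVandermonde_natCast {n : ℕ} (t : Fin n → ℝ) :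
    rpowVandermonde (fun j => (j : ℝ)) t = Matrix.vandermonde t := by
  ext i j
  simp [rpowVandermonde, Matrix.vandermonde_apply]

theorem continuousOn_det_rpowVandermonde {n : ℕ} :
    ContinuousOn (fun x : (Fin n → ℝ) × (Fin n → ℝ) => (rpowVandermonde x.1 x.2).det)
      {x | ∀ i, 0 < x.2 i} := by
  refine (continuous_id.matrix_det).comp_continuousOn
    (continuousOn_pi.2 fun i => continuousOn_pi.2 fun j => ?_)
  exact (continuous_apply i |>.comp continuous_snd).continuousOn.rpow
    (continuous_apply j |>.comp continuous_fst).continuousOn fun x hx => Or.inl (hx i).ne'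

/-- Generalized Vandermonde determinants `det (tᵢ^{pⱼ})` are strictly positive for
`0 < t₁ < ⋯ < tₙ` and `p₁ < ⋯ < pₙ`. -/
theorem stmt_2 (n : ℕ) (p t : Fin n → ℝ) (hp : StrictMono p) (ht : StrictMono t)
    (ht0 : ∀ i, 0 < t i) :
    0 < Matrix.det (Matrix.of fun i j : Fin n => (t i) ^ (p j)) := by
  set S : Set ((Fin n → ℝ) × (Fin n → ℝ)) :=
    {p | StrictMono p} ×ˢ ({t | StrictMono t} ∩ univ.pi fun _ => Ioi 0)
  have hS : IsPreconnected S :=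
    (convex_setOf_strictMono.prod
      (convex_setOf_strictMono.inter (convex_pi fun _ _ => convex_Ioi 0))).isPreconnected
  have hbase : ((fun j : Fin n => (j : ℝ)), fun i : Fin n => (i : ℝ) + 1) ∈ S :=
    ⟨fun _ _ h => by simpa using h, fun _ _ h => by simpa using h, fun i _ => by
      simp only [mem_Ioi]; positivity⟩
  refine hS.pos_of_pos_of_ne_zero (f := fun x => (rpowVandermonde x.1 x.2).det)
    (continuousOn_det_rpowVandermonde.mono fun x hx i => hx.2.2 i trivial)
    (fun x hx => det_rpowVandermonde_ne_zero hx.1.injective hx.2.1 fun i => hx.2.2 i trivial)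
    (a := (p, t)) ⟨hp, ht, fun i _ => ht0 i⟩ hbase ?_
  rw [rpowVandermonde_natCast]
  exact Matrix.det_vandermonde_pos fun _ _ h => by simpa using h
end

section
/- For every $p \geq 2$, the function $h_1(x) = |x^{1/p} + 1|^p + |x^{1/p} - 1|^p$ is concave on $[0,\infty)$; for every $p \in [1,2]$, $h_1$ is convex on $[0,\infty)$. -/
/-!
Write `φ(v) = |v|^{p-2} v` for the odd extension of `v ↦ v^{p-1}`. For `x > 0`, put
`t = x^{1/p}` and `s = 1/t`; the chain rule gives `h₁'(x) = t^{1-p} (φ(t+1) + φ(t-1))`, and by the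
`(p-1)`-homogeneity of `φ` this is `φ(1+s) + φ(1-s)`. Away from `s = 1` the latter has derivative
`(p-1)((1+s)^{p-2} - |1-s|^{p-2})`, whose sign is that of `p - 2` because `|1-s| ≤ 1+s`. As `s`
decreases in `x`, `h₁'` is antitone for `p ≥ 2` and monotone for `1 < p ≤ 2`. For `p = 1`,
`h₁(x) = |x+1| + |x-1|` is a sum of distances.
-/

open Real Set

theorem monotoneOn_Ioi_of_hasDerivAt_of_ne {f f' : ℝ → ℝ} {a c : ℝ} (hac : a < c)
    (hf : ContinuousOn f (Ioi a)) (hf' : ∀ x ∈ Ioi a, x ≠ c → HasDerivAt f (f' x) x)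
    (hf'₀ : ∀ x ∈ Ioi a, x ≠ c → 0 ≤ f' x) : MonotoneOn f (Ioi a) := by
  rw [← Ioc_union_Ici_eq_Ioi hac]
  refine MonotoneOn.union_right ?_ ?_ (isGreatest_Ioc hac) isLeast_Ici
  · have hd : ∀ x ∈ Ioo a c, HasDerivAt f (f' x) x := fun x hx => hf' x hx.1 hx.2.ne
    refine monotoneOn_of_deriv_nonneg (convex_Ioc a c) (hf.mono Ioc_subset_Ioi_self) ?_ ?_
    · rw [interior_Ioc]
      exact fun x hx => (hd x hx).differentiableAt.differentiableWithinAt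
    · rw [interior_Ioc]
      exact fun x hx => (hd x hx).deriv ▸ hf'₀ x hx.1 hx.2.ne
  · have hd : ∀ x ∈ Ioi c, HasDerivAt f (f' x) x :=
      fun x hx => hf' x (hac.trans hx) (ne_of_gt hx)
    refine monotoneOn_of_deriv_nonneg (convex_Ici c) (hf.mono (Ici_subset_Ioi.2 hac)) ?_ ?_
    · rw [interior_Ici]
      exact fun x hx => (hd x hx).differentiableAt.differentiableWithinAt
    · rw [interior_Ici]
      exact fun x hx => (hd x hx).deriv ▸ hf'₀ x (hac.trans hx) (ne_of_gt hx)

/-- The odd extension `sign v * |v| ^ q` of `v ↦ v ^ q`. -/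
noncomputable def signedRpow (q v : ℝ) : ℝ := |v| ^ (q - 1) * v

section signedRpow

variable {q : ℝ}

theorem abs_signedRpow (hq : q ≠ 0) (v : ℝ) : |signedRpow q v| = |v| ^ q := by
  rcases eq_or_ne v 0 with rfl | hv
  · simp [signedRpow, zero_rpow hq]
  · rw [signedRpow, abs_mul, abs_of_nonneg (by positivity), rpow_sub_one (abs_ne_zero.2 hv),
      div_mul_cancel₀ _ (abs_ne_zero.2 hv)]

theorem signedRpow_mul {c : ℝ} (hc : 0 < c) (v : ℝ) :
    signedRpow q (c * v) = c ^ q * signedRpow q v := by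
  rw [signedRpow, signedRpow, abs_mul, abs_of_pos hc, mul_rpow hc.le (abs_nonneg v),
    rpow_sub_one hc.ne']
  field_simp

theorem continuous_signedRpow (hq : 0 < q) : Continuous (signedRpow q) := by
  refine continuous_iff_continuousAt.2 fun v => ?_
  rcases eq_or_ne v 0 with rfl | hv
  · rw [ContinuousAt, show signedRpow q 0 = 0 by simp [signedRpow]]
    refine squeeze_zero_norm (fun w => (abs_signedRpow hq.ne' w).le) ?_
    simpa [zero_rpow hq.ne'] using ((continuous_abs.rpow_const fun _ => Or.inr hq.le).tendsto 0)
  · exact (continuous_abs.continuousAt.rpow_const (Or.inl (abs_ne_zero.2 hv))).mul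
      continuousAt_id

theorem hasDerivAt_signedRpow {v : ℝ} (hv : v ≠ 0) :
    HasDerivAt (signedRpow q) (q * |v| ^ (q - 1)) v := by
  have hv' : |v| ≠ 0 := abs_ne_zero.2 hv
  refine (((hasDerivAt_abs hv).rpow_const (p := q - 1) (Or.inl hv')).mul
    (hasDerivAt_id' v)).congr_deriv ?_
  have hsv : (SignType.sign v : ℝ) * v = |v| := sign_mul_self v
  rw [rpow_sub_one hv']
  calc _ = (q - 1) * |v| ^ (q - 1) * ((SignType.sign v : ℝ) * v / |v|) + |v| ^ (q - 1) := by ring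
    _ = q * |v| ^ (q - 1) := by rw [hsv, div_self hv']; ring

end signedRpow

noncomputable def signedRpowPair (q s : ℝ) : ℝ := signedRpow q (1 + s) + signedRpow q (1 - s)

section signedRpowPair

variable {q : ℝ}

theorem hasDerivAt_signedRpowPair {s : ℝ} (hs : 0 < s) (hs1 : s ≠ 1) :
    HasDerivAt (signedRpowPair q) (q * ((1 + s) ^ (q - 1) - |1 - s| ^ (q - 1))) s := by
  have hplus := (hasDerivAt_signedRpow (q := q) (by linarith : 1 + s ≠ 0)).comp s
    ((hasDerivAt_id s).const_add 1)
  have hminus := (hasDerivAt_signedRpow (q := q) (sub_ne_zero.2 hs1.symm)).comp s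
    ((hasDerivAt_id s).const_sub 1)
  refine (hplus.add hminus).congr_deriv ?_
  rw [abs_of_pos (by linarith : 0 < 1 + s)]
  ring

theorem abs_one_sub_le_one_add {s : ℝ} (hs : 0 < s) : |1 - s| ≤ 1 + s :=
  abs_le.2 ⟨by linarith, by linarith⟩

theorem continuous_signedRpowPair (hq : 0 < q) : Continuous (signedRpowPair q) :=
  ((continuous_signedRpow hq).comp (continuous_const.add continuous_id)).add
    ((continuous_signedRpow hq).comp (continuous_const.sub continuous_id))

theorem monotoneOn_signedRpowPair (hq : 1 ≤ q) : MonotoneOn (signedRpowPair q) (Ioi 0) := by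
  refine monotoneOn_Ioi_of_hasDerivAt_of_ne one_pos
    (continuous_signedRpowPair (by linarith)).continuousOn
    (fun s hs hs1 => hasDerivAt_signedRpowPair hs hs1) fun s (hs : 0 < s) _ => ?_
  have := rpow_le_rpow (abs_nonneg _) (abs_one_sub_le_one_add hs) (by linarith : 0 ≤ q - 1)
  nlinarith

theorem antitoneOn_signedRpowPair (hq₀ : 0 < q) (hq : q ≤ 1) :
    AntitoneOn (signedRpowPair q) (Ioi 0) := by
  have h := monotoneOn_Ioi_of_hasDerivAt_of_ne one_pos
    (continuous_signedRpowPair hq₀).neg.continuousOn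
    (fun s hs hs1 => (hasDerivAt_signedRpowPair (q := q) hs hs1).neg) fun s (hs : 0 < s) hs1 => ?_
  · simpa using h.neg
  have := rpow_le_rpow_of_nonpos (abs_pos.2 (sub_ne_zero.2 (Ne.symm hs1)))
    (abs_one_sub_le_one_add hs) (by linarith : q - 1 ≤ 0)
  nlinarith

end signedRpowPair

noncomputable def rootPowSum (p x : ℝ) : ℝ := |x ^ (1 / p) + 1| ^ p + |x ^ (1 / p) - 1| ^ p

section rootPowSum

variable {p : ℝ}

theorem continuous_rootPowSum (hp : 0 < p) : Continuous (rootPowSum p) := by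
  have hroot : Continuous fun x : ℝ => x ^ (1 / p) :=
    continuous_id.rpow_const fun _ => Or.inr (by positivity)
  exact (((hroot.add continuous_const).abs).rpow_const fun _ => Or.inr hp.le).add
    (((hroot.sub continuous_const).abs).rpow_const fun _ => Or.inr hp.le)

theorem hasDerivAt_rootPowSum (hp : 1 < p) {x : ℝ} (hx : 0 < x) :
    HasDerivAt (rootPowSum p) (signedRpowPair (p - 1) (x ^ (-(1 / p)))) x := by
  set t := x ^ (1 / p) with ht_def
  have ht : 0 < t := rpow_pos_of_pos hx _
  have hplus := (hasDerivAt_abs_rpow (t + 1) hp).comp t ((hasDerivAt_id t).add_const 1)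
  have hminus := (hasDerivAt_abs_rpow (t - 1) hp).comp t ((hasDerivAt_id t).sub_const 1)
  have hroot : HasDerivAt (fun x : ℝ => x ^ (1 / p)) (1 / p * x ^ (1 / p - 1)) x :=
    hasDerivAt_rpow_const (Or.inl hx.ne')
  refine ((hplus.add hminus).comp x hroot).congr_deriv ?_
  have hsigned : ∀ v, signedRpow (p - 1) v = |v| ^ (p - 2) * v := fun v => by
    rw [signedRpow, sub_sub]; norm_num
  have hinv : x ^ (-(1 / p)) = t⁻¹ := rpow_neg hx.le _
  have hscale : x ^ (1 / p - 1) = t⁻¹ ^ (p - 1) := by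
    rw [inv_rpow ht.le, ← rpow_neg ht.le, ht_def, ← rpow_mul hx.le]
    congr 1
    field_simp
    ring
  have hone_add : 1 + t⁻¹ = t⁻¹ * (t + 1) := by field_simp
  have hone_sub : 1 - t⁻¹ = t⁻¹ * (t - 1) := by field_simp
  rw [signedRpowPair, hinv, hone_add, hone_sub, signedRpow_mul (inv_pos.2 ht),
    signedRpow_mul (inv_pos.2 ht), hsigned, hsigned, hscale]
  field_simp

theorem eqOn_deriv_rootPowSum (hp : 1 < p) :
    EqOn (deriv (rootPowSum p)) (signedRpowPair (p - 1) ∘ fun x => x ^ (-(1 / p))) (Ioi 0) :=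
  fun _ hx => (hasDerivAt_rootPowSum hp hx).deriv

theorem differentiableOn_rootPowSum (hp : 1 < p) : DifferentiableOn ℝ (rootPowSum p) (Ioi 0) :=
  fun _ hx => (hasDerivAt_rootPowSum hp hx).differentiableAt.differentiableWithinAt

theorem concaveOn_rootPowSum (hp : 2 ≤ p) : ConcaveOn ℝ (Ici 0) (rootPowSum p) := by
  have hp1 : 1 < p := by linarith
  refine AntitoneOn.concaveOn_of_deriv (convex_Ici 0)
    (continuous_rootPowSum (by linarith)).continuousOn ?_ ?_ <;> rw [interior_Ici]
  · exact differentiableOn_rootPowSum hp1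
  · refine ((monotoneOn_signedRpowPair (by linarith)).comp_AntitoneOn
      (antitoneOn_rpow_Ioi_of_exponent_nonpos ?_) fun _ hx => rpow_pos_of_pos hx _).congr
      (eqOn_deriv_rootPowSum hp1).symm
    simp only [neg_nonpos, one_div, inv_nonneg]
    linarith

theorem convexOn_rootPowSum_of_one_lt (hp₁ : 1 < p) (hp₂ : p ≤ 2) :
    ConvexOn ℝ (Ici 0) (rootPowSum p) := by
  refine MonotoneOn.convexOn_of_deriv (convex_Ici 0)
    (continuous_rootPowSum (by linarith)).continuousOn ?_ ?_ <;> rw [interior_Ici]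
  · exact differentiableOn_rootPowSum hp₁
  · refine ((antitoneOn_signedRpowPair (by linarith) (by linarith)).comp
      (antitoneOn_rpow_Ioi_of_exponent_nonpos ?_) fun _ hx => rpow_pos_of_pos hx _).congr
      (eqOn_deriv_rootPowSum hp₁).symm
    simp only [neg_nonpos, one_div, inv_nonneg]
    linarith

theorem convexOn_rootPowSum_one : ConvexOn ℝ (Ici 0) (rootPowSum 1) :=
  ((convexOn_dist (-1) (convex_Ici 0)).add (convexOn_dist 1 (convex_Ici 0))).congr
    fun x _ => by simp [rootPowSum, dist_eq_norm]

theorem convexOn_rootPowSum (hp₁ : 1 ≤ p) (hp₂ : p ≤ 2) : ConvexOn ℝ (Ici 0) (rootPowSum p) := by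
  rcases hp₁.eq_or_lt with rfl | hp₁
  · exact convexOn_rootPowSum_one
  · exact convexOn_rootPowSum_of_one_lt hp₁ hp₂

end rootPowSum

/-- The function `h₁(x) = |x^{1/p}+1|^p + |x^{1/p}-1|^p` is concave on `[0,∞)` for `p ≥ 2`
and convex on `[0,∞)` for `p ∈ [1,2]`. -/
theorem stmt_4 (p : ℝ)
    (h₁ : ℝ → ℝ) (hh₁ : ∀ x : ℝ, 0 ≤ x →
      h₁ x = |x ^ (1/p) + 1| ^ p + |x ^ (1/p) - 1| ^ p) :
    (2 ≤ p → ConcaveOn ℝ (Set.Ici 0) h₁) ∧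
    (1 ≤ p → p ≤ 2 → ConvexOn ℝ (Set.Ici 0) h₁) := by
  have h_eq : EqOn (rootPowSum p) h₁ (Ici 0) := fun x hx => (hh₁ x hx).symm
  exact ⟨fun hp => (concaveOn_rootPowSum hp).congr h_eq,
    fun hp₁ hp₂ => (convexOn_rootPowSum hp₁ hp₂).congr h_eq⟩
end

section
/- For every $p \geq 2$, the function $h_2(x) = \int_{-1}^{1} |x^{1/2} + u|^p\, du$ is convex on $[0,\infty)$; for every $p \in [1,2]$, $h_2$ is concave on $[0,\infty)$. -/
open Real Set intervalIntegral

/-!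
Write `F t = ∫ u in -1..1, |t + u| ^ p`, so that `F' t = g t := |t + 1| ^ p - |t - 1| ^ p` and
`h₂ = F ∘ √` has derivative `g (√x) / (2 √x)` at `x > 0`: convexity of `h₂` follows once
`t ↦ g t / t` is monotone on `(0, ∞)`. Since `g` fails to be twice differentiable at `1` when
`p < 2`, this is checked on two pieces. On `(0, 1]`, `g t / t` is a secant slope from `0` of `g`,
and `g'' t = p (p - 1) ((1 + t) ^ (p - 2) - (1 - t) ^ (p - 2))` has the sign of `p - 2`. On
`[1, ∞)`, with `a = t + 1`, `b = t - 1`,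
`2 (t g' t - g t) = (p - 2) (a ^ p - b ^ p) + p a b (a ^ (p - 2) - b ^ (p - 2))`,
which again has the sign of `p - 2`. The cases `2 ≤ p` and `1 ≤ p ≤ 2` are treated at once by
proving that `ε * h₂` is convex whenever `0 ≤ ε * (p - 2)`.
-/

theorem hasDerivAt_integral_comp_add {f : ℝ → ℝ} (hf : Continuous f) (a b t : ℝ) :
    HasDerivAt (fun t => ∫ u in a..b, f (t + u)) (f (t + b) - f (t + a)) t := by
  have hprim (c : ℝ) : HasDerivAt (fun t => ∫ x in (0 : ℝ)..t + c, f x) (f (t + c)) t :=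
    (hf.integral_hasStrictDerivAt 0 (t + c)).hasDerivAt.comp_add_const t c
  refine ((hprim b).sub (hprim a)).congr_of_eventuallyEq (Filter.Eventually.of_forall fun s => ?_)
  simp only [Pi.sub_apply]
  rw [integral_comp_add_left, integral_interval_sub_left (hf.intervalIntegrable _ _)
    (hf.intervalIntegrable _ _)]

theorem convexOn_comp_sqrt_of_monotoneOn {F G : ℝ → ℝ} (hF : ∀ t, HasDerivAt F (G t) t)
    (hG : MonotoneOn (fun t => G t / t) (Ioi 0)) : ConvexOn ℝ (Ici 0) (fun x => F √x) := by
  have hderiv :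
      ∀ x ∈ interior (Ici (0 : ℝ)), HasDerivAt (fun x => F √x) (G √x / √x / 2) x := by
    rw [interior_Ici]
    intro x hx
    refine ((hF √x).comp x (hasDerivAt_sqrt (ne_of_gt hx))).congr_deriv ?_
    field_simp
  refine MonotoneOn.convexOn_of_deriv (convex_Ici 0)
    (fun x _ => ((hF √x).continuousAt.comp continuous_sqrt.continuousAt).continuousWithinAt)
    (fun x hx => (hderiv x hx).differentiableAt.differentiableWithinAt) ?_
  intro x hx y hy hxy
  rw [(hderiv x hx).deriv, (hderiv y hy).deriv]
  rw [interior_Ici] at hx hy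
  exact div_le_div_of_nonneg_right (hG (sqrt_pos.2 hx) (sqrt_pos.2 hy) (sqrt_le_sqrt hxy))
    zero_le_two

theorem monotoneOn_div_self_of_convexOn {g : ℝ → ℝ} {c : ℝ} (hg : ConvexOn ℝ (Icc 0 c) g)
    (hg0 : g 0 = 0) : MonotoneOn (fun t => g t / t) (Ioc 0 c) := by
  intro x hx y hy hxy
  have h0 : (0 : ℝ) ∈ Icc 0 c := ⟨le_rfl, hx.1.le.trans hx.2⟩
  simpa [hg0] using hg.secant_mono h0 (Ioc_subset_Icc_self hx) (Ioc_subset_Icc_self hy)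
    hx.1.ne' hy.1.ne' hxy

theorem monotoneOn_div_self_of_le_mul_deriv {g g' : ℝ → ℝ} {c : ℝ} (hc : 0 < c)
    (hcont : ContinuousOn g (Ici c)) (hg : ∀ t, c < t → HasDerivAt g (g' t) t)
    (hle : ∀ t, c < t → g t ≤ t * g' t) : MonotoneOn (fun t => g t / t) (Ici c) := by
  have hderiv : ∀ t ∈ interior (Ici c), HasDerivAt (fun t => g t / t)
      ((g' t * t - g t * 1) / t ^ 2) t := by
    rw [interior_Ici]
    exact fun t ht => (hg t ht).div (hasDerivAt_id t) (hc.trans ht).ne'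
  refine monotoneOn_of_deriv_nonneg (convex_Ici c)
    (hcont.div continuousOn_id fun t ht => (hc.trans_le ht).ne')
    (fun t ht => (hderiv t ht).differentiableAt.differentiableWithinAt) fun t ht => ?_
  rw [(hderiv t ht).deriv]
  rw [interior_Ici] at ht
  exact div_nonneg (by linarith [hle t ht]) (sq_nonneg t)

theorem monotoneOn_div_self_Ioi {g g' : ℝ → ℝ} {c : ℝ} (hc : 0 < c)
    (hconv : ConvexOn ℝ (Icc 0 c) g) (hg0 : g 0 = 0) (hcont : ContinuousOn g (Ici c))
    (hg : ∀ t, c < t → HasDerivAt g (g' t) t) (hle : ∀ t, c < t → g t ≤ t * g' t) :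
    MonotoneOn (fun t => g t / t) (Ioi 0) := by
  have h := (monotoneOn_div_self_of_convexOn hconv hg0).union_right
    (monotoneOn_div_self_of_le_mul_deriv hc hcont hg hle) (isGreatest_Ioc hc) isLeast_Ici
  rwa [Ioc_union_Ici_eq_Ioi hc] at h

theorem mul_rpow_sub_rpow_nonneg {ε r a b : ℝ} (h : 0 ≤ ε * r) (hb : 0 < b) (hab : b ≤ a) :
    0 ≤ ε * (a ^ r - b ^ r) := by
  rcases lt_trichotomy r 0 with hr | rfl | hr
  · exact mul_nonneg_of_nonpos_of_nonpos (nonpos_of_mul_nonneg_left h hr)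
      (sub_nonpos.2 (rpow_le_rpow_of_nonpos hb hab hr.le))
  · simp
  · exact mul_nonneg (nonneg_of_mul_nonneg_left h hr)
      (sub_nonneg.2 (rpow_le_rpow hb.le hab hr.le))

section
variable {p ε : ℝ}

theorem convexOn_mul_abs_rpow_sub_Icc (hp : 1 ≤ p) (hε : 0 ≤ ε * (p - 2)) :
    ConvexOn ℝ (Icc 0 1) fun t => ε * (|t + 1| ^ p - |t - 1| ^ p) := by
  have hplus {r t : ℝ} (ht : t ∈ Ioo (0 : ℝ) 1) :
      HasDerivAt (fun t => (t + 1) ^ r) (r * (t + 1) ^ (r - 1)) t := by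
    simpa using ((hasDerivAt_id t).add_const 1).rpow_const (p := r)
      (Or.inl (by simp only [id]; linarith [ht.1]))
  have hminus {r t : ℝ} (ht : t ∈ Ioo (0 : ℝ) 1) :
      HasDerivAt (fun t => (1 - t) ^ r) (-(r * (1 - t) ^ (r - 1))) t := by
    simpa using ((hasDerivAt_id t).const_sub 1).rpow_const (p := r)
      (Or.inl (by simp only [id]; linarith [ht.2]))
  have hEq : EqOn (fun t => ε * ((t + 1) ^ p - (1 - t) ^ p))
      (fun t => ε * (|t + 1| ^ p - |t - 1| ^ p)) (Icc 0 1) := by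
    intro t ht
    simp only [abs_of_nonneg (by linarith [ht.1] : 0 ≤ t + 1), abs_sub_comm t,
      abs_of_nonneg (sub_nonneg.2 ht.2)]
  have hp0 : 0 ≤ p := by linarith
  refine ConvexOn.congr (convexOn_of_hasDerivWithinAt2_nonneg (convex_Icc 0 1)
    (f' := fun t => ε * (p * ((t + 1) ^ (p - 1) + (1 - t) ^ (p - 1))))
    (f'' := fun t => ε * (p * (p - 1) * ((t + 1) ^ (p - 2) - (1 - t) ^ (p - 2))))
    (by fun_prop (disch := assumption)) ?_ ?_ ?_) hEq <;> rw [interior_Icc] <;> intro t ht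
  · exact (((hplus ht).sub (hminus ht)).const_mul ε).hasDerivWithinAt.congr_deriv (by ring)
  · refine ((((hplus ht).add (hminus ht)).const_mul p).const_mul ε).hasDerivWithinAt
      |>.congr_deriv ?_
    rw [sub_sub, one_add_one_eq_two]
    ring
  · rw [mul_left_comm]
    exact mul_nonneg (mul_nonneg hp0 (by linarith))
      (mul_rpow_sub_rpow_nonneg hε (by linarith [ht.2]) (by linarith [ht.1]))

theorem hasDerivAt_mul_abs_rpow_sub {t : ℝ} (ht : 1 < t) :
    HasDerivAt (fun t => ε * (|t + 1| ^ p - |t - 1| ^ p))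
      (ε * (p * ((t + 1) ^ (p - 1) - (t - 1) ^ (p - 1)))) t := by
  have hplus := ((hasDerivAt_id t).add_const 1).rpow_const (p := p)
    (Or.inl (by simp only [id]; linarith))
  have hminus := ((hasDerivAt_id t).sub_const 1).rpow_const (p := p)
    (Or.inl (by simp only [id]; linarith))
  refine ((hplus.sub hminus).const_mul ε).congr_of_eventuallyEq ?_
    |>.congr_deriv (by simp only [id]; ring)
  filter_upwards [Ioi_mem_nhds ht] with s hs
  simp only [id, abs_of_pos (by linarith [mem_Ioi.1 hs] : 0 < s + 1),
    abs_of_pos (sub_pos.2 (mem_Ioi.1 hs))]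
  rfl

theorem mul_abs_rpow_sub_le (hp : 1 ≤ p) (hε : 0 ≤ ε * (p - 2)) {t : ℝ} (ht : 1 < t) :
    ε * (|t + 1| ^ p - |t - 1| ^ p) ≤
      t * (ε * (p * ((t + 1) ^ (p - 1) - (t - 1) ^ (p - 1)))) := by
  set a := t + 1
  set b := t - 1
  have hb : 0 < b := sub_pos.2 ht
  have hab : b ≤ a := by linarith
  have ha : 0 < a := hb.trans_le hab
  have hp0 : 0 ≤ p := by linarith
  have hpow {c : ℝ} (hc : 0 < c) :
      c ^ p = c ^ (p - 2) * c * c ∧ c ^ (p - 1) = c ^ (p - 2) * c := by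
    rw [← rpow_add_one hc.ne', ← rpow_add_one hc.ne']
    constructor <;> ring_nf
  have key : 2 * (t * (ε * (p * (a ^ (p - 1) - b ^ (p - 1)))) - ε * (a ^ p - b ^ p)) =
      ε * (p - 2) * (a ^ p - b ^ p) + p * a * b * (ε * (a ^ (p - 2) - b ^ (p - 2))) := by
    rw [(hpow ha).1, (hpow ha).2, (hpow hb).1, (hpow hb).2, show t = (a + b) / 2 by ring]
    ring
  rw [abs_of_pos ha, abs_of_pos hb]
  linarith [mul_nonneg hε (sub_nonneg.2 (rpow_le_rpow hb.le hab hp0)),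
    mul_nonneg (mul_nonneg (mul_nonneg hp0 ha.le) hb.le) (mul_rpow_sub_rpow_nonneg hε hb hab)]

theorem convexOn_mul_integral_abs_rpow_sqrt (hp : 1 ≤ p) (hε : 0 ≤ ε * (p - 2)) :
    ConvexOn ℝ (Ici 0) fun x => ε * ∫ u in (-1 : ℝ)..1, |√x + u| ^ p := by
  have hp0 : 0 ≤ p := by linarith
  have hcont : Continuous fun v : ℝ => |v| ^ p := by fun_prop (disch := assumption)
  refine convexOn_comp_sqrt_of_monotoneOn (F := fun t => ε * ∫ u in (-1 : ℝ)..1, |t + u| ^ p)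
    (G := fun t => ε * (|t + 1| ^ p - |t - 1| ^ p)) (fun t => ?_) ?_
  · simpa [sub_eq_add_neg] using (hasDerivAt_integral_comp_add hcont (-1) 1 t).const_mul ε
  · exact monotoneOn_div_self_Ioi one_pos (convexOn_mul_abs_rpow_sub_Icc hp hε) (by simp)
      (by fun_prop (disch := assumption)) (fun t ht => hasDerivAt_mul_abs_rpow_sub ht)
      (fun t ht => mul_abs_rpow_sub_le hp hε ht)

end

/-- The function `h₂(x) = ∫_{-1}^{1} |√x + u|^p du` is convex on `[0,∞)` for `p ≥ 2`
and concave on `[0,∞)` for `p ∈ [1,2]`. -/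
theorem stmt_5 (p : ℝ)
    (h₂ : ℝ → ℝ) (hh₂ : ∀ x : ℝ, 0 ≤ x →
      h₂ x = ∫ u in (-1:ℝ)..1, |Real.sqrt x + u| ^ p) :
    (2 ≤ p → ConvexOn ℝ (Set.Ici 0) h₂) ∧
    (1 ≤ p → p ≤ 2 → ConcaveOn ℝ (Set.Ici 0) h₂) := by
  have hEq : EqOn (fun x => ∫ u in (-1 : ℝ)..1, |√x + u| ^ p) h₂ (Ici 0) :=
    fun x hx => (hh₂ x hx).symm
  refine ⟨fun hp => ?_, fun hp1 hp2 => ?_⟩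
  · have h := convexOn_mul_integral_abs_rpow_sqrt (ε := 1) (by linarith) (by linarith)
    simp only [one_mul] at h
    exact h.congr hEq
  · have h := convexOn_mul_integral_abs_rpow_sqrt (ε := -1) hp1 (by linarith)
    simp only [neg_one_mul] at h
    exact (neg_convexOn_iff.1 h).congr hEq
end

section
/- If $X$ and $Y$ are independent symmetric unimodal real random variables, then $X + Y$ is symmetric unimodal. -/
open Set MeasureTheory ProbabilityTheory
open scoped ENNReal

/-!
The law of `X + Y` has density `F ⋆ₗ G`, the convolution of the densities, so it suffices that
convolution preserves symmetric unimodality. Evenness is a change of variables `y ↦ -y`. For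
`0 ≤ a ≤ b`, split the integral at `(a + b) / 2` and fold the left half onto the right by
`y ↦ a + b - y`: for `y > (a + b) / 2` we have `F y ≤ F (a + b - y)` and `G (a - y) ≤ G (b - y)`,
and the binary rearrangement inequality compares the folded integrands of `(F ⋆ₗ G) b` and
`(F ⋆ₗ G) a` pointwise. The convolution is bounded by `F 0`, hence finite, so it can be taken
real-valued.
-/

structure IsSymmUnimodal {β : Type*} [Preorder β] (F : ℝ → β) : Prop where
  even : F.Even
  antitoneOn : AntitoneOn F (Ici 0)

namespace IsSymmUnimodal

variable {β γ : Type*} [Preorder β] [Preorder γ] {F : ℝ → β}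

theorem le_of_abs_le (hF : IsSymmUnimodal F) {s t : ℝ} (h : |s| ≤ |t|) : F t ≤ F s := by
  have habs : ∀ x, F |x| = F x := fun x => by
    rcases abs_choice x with hx | hx <;> rw [hx]
    exact hF.even x
  rw [← habs s, ← habs t]
  exact hF.antitoneOn (abs_nonneg s) ((abs_nonneg s).trans h) h

theorem le_apply_zero (hF : IsSymmUnimodal F) (t : ℝ) : F t ≤ F 0 :=
  hF.le_of_abs_le (by simp)

theorem comp_monotoneOn (hF : IsSymmUnimodal F) {φ : β → γ} {s : Set β}
    (hφ : MonotoneOn φ s) (hs : ∀ x, F x ∈ s) : IsSymmUnimodal (φ ∘ F) where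
  even x := congrArg φ (hF.even x)
  antitoneOn _ ha _ hb hab := hφ (hs _) (hs _) (hF.antitoneOn ha hb hab)

end IsSymmUnimodal

theorem ENNReal.mul_add_mul_le_mul_add_mul {a b c d : ℝ≥0∞} (hab : a ≤ b) (hcd : c ≤ d) :
    a * d + b * c ≤ a * c + b * d := by
  obtain ⟨p, rfl⟩ := exists_add_of_le hab
  obtain ⟨q, rfl⟩ := exists_add_of_le hcd
  calc a * (c + q) + (a + p) * c = a * c + (a * c + a * q + p * c) := by ring
    _ ≤ a * c + (a * c + a * q + p * c) + p * q := le_self_add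
    _ = a * c + (a + p) * (c + q) := by ring

theorem lintegral_eq_setLIntegral_Ioi_add_reflect {φ : ℝ → ℝ≥0∞} (hφ : Measurable φ) (s : ℝ) :
    ∫⁻ y, φ y = ∫⁻ y in Ioi (s / 2), (φ y + φ (s - y)) := by
  have hpre : (s - ·) ⁻¹' Iio (s / 2) = Ioi (s / 2) := by
    ext y; simp only [mem_preimage, mem_Iio, mem_Ioi]; constructor <;> intro h <;> linarith
  have hreflect : ∫⁻ y in Ioi (s / 2), φ (s - y) = ∫⁻ y in Iio (s / 2), φ y := by
    rw [← hpre]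
    exact (Measure.measurePreserving_sub_left volume s).setLIntegral_comp_preimage_emb
      (MeasurableEquiv.subLeft s).measurableEmbedding φ _
  rw [lintegral_add_left hφ, hreflect, ← lintegral_add_compl φ measurableSet_Iio, compl_Iio,
    setLIntegral_congr Ioi_ae_eq_Ici, add_comm]

section Convolution

variable {G : Type*} [AddCommGroup G] [MeasurableSpace G] {μ : Measure G} {F K : G → ℝ≥0∞}

theorem Function.Even.lconvolution [MeasurableNeg G] [μ.IsNegInvariant] (hF : F.Even)
    (hK : K.Even) : (F ⋆ₗ[μ] K).Even := by
  intro x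
  simp only [lconvolution_def]
  rw [← lintegral_neg_eq_self]
  congr 1 with y
  rw [hF, ← hK]
  congr 2
  abel

theorem lconvolution_le_mul_lintegral [MeasurableAdd₂ G] [MeasurableNeg G] [μ.IsNegInvariant]
    [μ.IsAddRightInvariant] {C : ℝ≥0∞} (hF : ∀ y, F y ≤ C) (hK : Measurable K) (x : G) :
    (F ⋆ₗ[μ] K) x ≤ C * ∫⁻ y, K y ∂μ :=
  calc (F ⋆ₗ[μ] K) x ≤ ∫⁻ y, C * K (-y + x) ∂μ := lintegral_mono fun y => by gcongr; exact hF y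
    _ = C * ∫⁻ y, K y ∂μ := by
      rw [lintegral_const_mul _ (by fun_prop), lintegral_neg_eq_self (fun y => K (y + x)),
        lintegral_add_right_eq_self]

end Convolution

theorem IsSymmUnimodal.antitoneOn_lconvolution {F G : ℝ → ℝ≥0∞} (hF : IsSymmUnimodal F)
    (hG : IsSymmUnimodal G) (hFm : Measurable F) (hGm : Measurable G) :
    AntitoneOn (F ⋆ₗ G) (Ici 0) := by
  intro a ha b hb hab
  simp only [mem_Ici] at ha hb
  have hpair : ∀ x, (F ⋆ₗ G) x =
      ∫⁻ y in Ioi ((a + b) / 2), (F y * G (x - y) + F (a + b - y) * G (x - (a + b - y))) := by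
    intro x
    simp only [lconvolution_def, neg_add_eq_sub]
    exact lintegral_eq_setLIntegral_Ioi_add_reflect (by fun_prop) _
  rw [hpair, hpair]
  refine setLIntegral_mono' measurableSet_Ioi fun y hy => ?_
  simp only [mem_Ioi] at hy
  have hFy : F y ≤ F (a + b - y) := hF.le_of_abs_le (abs_le_abs (by linarith) (by linarith))
  have hGy : G (a - y) ≤ G (b - y) := hG.le_of_abs_le (sq_le_sq.mp (by nlinarith))
  rw [show b - (a + b - y) = -(a - y) by ring, show a - (a + b - y) = -(b - y) by ring,
    hG.even, hG.even]
  exact ENNReal.mul_add_mul_le_mul_add_mul hFy hGy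

theorem IsSymmUnimodal.lconvolution {F G : ℝ → ℝ≥0∞} (hF : IsSymmUnimodal F)
    (hG : IsSymmUnimodal G) (hFm : Measurable F) (hGm : Measurable G) :
    IsSymmUnimodal (F ⋆ₗ G) :=
  ⟨hF.even.lconvolution hG.even, hF.antitoneOn_lconvolution hG hFm hGm⟩

theorem stmt_8_general {Ω : Type*} [MeasureSpace Ω] [IsProbabilityMeasure (ℙ : Measure Ω)]
    (X Y : Ω → ℝ) (hX : Measurable X) (hY : Measurable Y) (hindep : IndepFun X Y)
    (f g : ℝ → ℝ) (hfmeas : Measurable f) (hgmeas : Measurable g)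
    (hfdens : (ℙ : Measure Ω).map X = volume.withDensity (fun x => ENNReal.ofReal (f x)))
    (hgdens : (ℙ : Measure Ω).map Y = volume.withDensity (fun x => ENNReal.ofReal (g x)))
    (hfeven : ∀ x, f (-x) = f x) (hgeven : ∀ x, g (-x) = g x)
    (hfmono : AntitoneOn f (Set.Ici 0)) (hgmono : AntitoneOn g (Set.Ici 0)) :
    ∃ h : ℝ → ℝ, Measurable h ∧ (∀ x, 0 ≤ h x) ∧
      (ℙ : Measure Ω).map (fun ω => X ω + Y ω) =
        volume.withDensity (fun x => ENNReal.ofReal (h x)) ∧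
      (∀ x, h (-x) = h x) ∧ AntitoneOn h (Set.Ici 0) := by
  set F : ℝ → ℝ≥0∞ := fun x => ENNReal.ofReal (f x)
  set G : ℝ → ℝ≥0∞ := fun x => ENNReal.ofReal (g x)
  have hF : IsSymmUnimodal F :=
    (IsSymmUnimodal.mk hfeven hfmono).comp_monotoneOn (ENNReal.ofReal_mono.monotoneOn univ)
      fun _ => mem_univ _
  have hG : IsSymmUnimodal G :=
    (IsSymmUnimodal.mk hgeven hgmono).comp_monotoneOn (ENNReal.ofReal_mono.monotoneOn univ)
      fun _ => mem_univ _
  have hlaw : (ℙ : Measure Ω).map (fun ω => X ω + Y ω) = volume.withDensity (F ⋆ₗ G) := by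
    rw [← conv_withDensity_eq_lconvolution (by fun_prop) (by fun_prop), ← hfdens, ← hgdens]
    exact hindep.map_add_eq_map_conv_map hX hY
  have hmassG : ∫⁻ y, G y = 1 := by
    simpa [hgdens] using (Measure.isProbabilityMeasure_map (μ := ℙ) hY.aemeasurable).measure_univ
  have hfin : ∀ x, (F ⋆ₗ G) x ≠ ∞ := fun x =>
    ne_top_of_le_ne_top (by simp [F, hmassG]) (lconvolution_le_mul_lintegral hF.le_apply_zero
      (by fun_prop) x)
  have hH : IsSymmUnimodal fun x => ((F ⋆ₗ G) x).toReal :=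
    (hF.lconvolution hG (by fun_prop) (by fun_prop)).comp_monotoneOn
      (s := {∞}ᶜ) (fun _ _ _ hb hab => ENNReal.toReal_mono hb hab) hfin
  refine ⟨_, (measurable_lconvolution _ (by fun_prop) (by fun_prop)).ennreal_toReal,
    fun _ => ENNReal.toReal_nonneg, ?_, hH.even, hH.antitoneOn⟩
  simp only [ENNReal.ofReal_toReal (hfin _), hlaw]

/-- The sum of two independent symmetric unimodal random variables is symmetric unimodal. -/
theorem stmt_8 {Ω : Type*} [MeasureSpace Ω] [IsProbabilityMeasure (ℙ : Measure Ω)]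
    (X Y : Ω → ℝ) (hX : Measurable X) (hY : Measurable Y) (hindep : IndepFun X Y)
    (f g : ℝ → ℝ) (hfmeas : Measurable f) (hgmeas : Measurable g)
    (hf0 : ∀ x, 0 ≤ f x) (hg0 : ∀ x, 0 ≤ g x)
    (hfdens : (ℙ : Measure Ω).map X = volume.withDensity (fun x => ENNReal.ofReal (f x)))
    (hgdens : (ℙ : Measure Ω).map Y = volume.withDensity (fun x => ENNReal.ofReal (g x)))
    (hfeven : ∀ x, f (-x) = f x) (hgeven : ∀ x, g (-x) = g x)
    (hfmono : AntitoneOn f (Set.Ici 0)) (hgmono : AntitoneOn g (Set.Ici 0)) :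
    ∃ h : ℝ → ℝ, Measurable h ∧ (∀ x, 0 ≤ h x) ∧
      (ℙ : Measure Ω).map (fun ω => X ω + Y ω) =
        volume.withDensity (fun x => ENNReal.ofReal (h x)) ∧
      (∀ x, h (-x) = h x) ∧ AntitoneOn h (Set.Ici 0) :=
  stmt_8_general X Y hX hY hindep f g hfmeas hgmeas hfdens hgdens hfeven hgeven hfmono hgmono
end

section
/- Let $\Phi : \mathbb{R} \to \mathbb{R}$ be an even $C^3$ function such that for every $a, b > 0$ the function $h_{a,b}(x) = \int_{-b}^{b}\int_{-a}^{a} \Phi(u + \sqrt{x}\, v)\, du\, dv$ is convex on $[0,\infty)$. Then $\Phi'''(x) \geq 0$ for every $x \geq 0$. -/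
/-!
Let `F' = Φ` and `G' = F` with `G` even (possible because `Φ` is even). Integrating out the
rectangle `[-a, a] × [-1, 1]` gives `h_{a,1}(s²) = 2 (G(a+s) - G(a-s)) / s`, and for a function of
the form `g(√x) / √x` convexity at `x = s²` reads `s² g'' - 3 s g' + 3 g ≥ 0`. With
`ψ(t) = G(a+t) - G(a-t)`, the quantity `Q(t) = t² ψ'' - 3 t ψ' + 3 ψ` vanishes at `0` and has
`Q' = t (t ψ''' - ψ'')`, where `t ψ''' - ψ''` again vanishes at `0` and has derivative
`t ψ'''' (t) = t (Φ''(a+t) - Φ''(a-t))`. If `Φ'''(a) < 0` this is negative for small `t > 0`,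
so `Q(t) < 0`, contradicting convexity. The case `x = 0` follows by continuity of `Φ'''`.
-/

open Real Set intervalIntegral

theorem neg_of_hasDerivAt_neg {f f' : ℝ → ℝ} {δ : ℝ} (hf : ∀ t, HasDerivAt f (f' t) t)
    (h₀ : f 0 = 0) (hf' : ∀ t ∈ Ioo 0 δ, f' t < 0) {t : ℝ} (ht : t ∈ Ioo 0 δ) : f t < 0 := by
  have hanti : StrictAntiOn f (Ico 0 δ) :=
    strictAntiOn_of_hasDerivWithinAt_neg (convex_Ico 0 δ)
      (fun x _ => (hf x).continuousAt.continuousWithinAt)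
      (fun x _ => (hf x).hasDerivWithinAt) (by simpa using hf')
  simpa [h₀] using hanti (left_mem_Ico.2 (ht.1.trans ht.2)) (Ioo_subset_Ico_self ht) ht.1

theorem exists_pos_forall_lt_of_deriv_neg {f f' : ℝ → ℝ} {a : ℝ}
    (hf : ∀ x, HasDerivAt f (f' x) x) (hf' : ContinuousAt f' a) (ha : f' a < 0) :
    ∃ δ > 0, ∀ t ∈ Ioo 0 δ, f (a + t) < f (a - t) := by
  obtain ⟨δ, hδ, hball⟩ :=
    Metric.eventually_nhds_iff_ball.1 (hf'.eventually_lt continuousAt_const ha)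
  have hanti : StrictAntiOn f (Metric.ball a δ) :=
    strictAntiOn_of_hasDerivWithinAt_neg (convex_ball a δ)
      (fun x _ => (hf x).continuousAt.continuousWithinAt)
      (fun x _ => (hf x).hasDerivWithinAt) (by simpa [Metric.isOpen_ball.interior_eq] using hball)
  refine ⟨δ, hδ, fun t ht => hanti ?_ ?_ (by linarith [ht.1])⟩ <;>
    simp [Metric.mem_ball, abs_of_pos ht.1, ht.2]

theorem hasDerivAt_comp_add_sub_comp_sub {f f' : ℝ → ℝ} (hf : ∀ x, HasDerivAt f (f' x) x)
    (a t : ℝ) : HasDerivAt (fun t => f (a + t) - f (a - t)) (f' (a + t) + f' (a - t)) t := by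
  simpa using ((hf _).comp_const_add a t).fun_sub ((hf _).comp_const_sub a t)

theorem hasDerivAt_comp_add_add_comp_sub {f f' : ℝ → ℝ} (hf : ∀ x, HasDerivAt f (f' x) x)
    (a t : ℝ) : HasDerivAt (fun t => f (a + t) + f (a - t)) (f' (a + t) - f' (a - t)) t := by
  simpa [sub_eq_add_neg] using ((hf _).comp_const_add a t).fun_add ((hf _).comp_const_sub a t)

theorem ContDiff.hasDerivAt_iteratedDeriv {𝕜 E : Type*} [NontriviallyNormedField 𝕜]
    [NormedAddCommGroup E] [NormedSpace 𝕜 E] {f : 𝕜 → E} {n : WithTop ℕ∞} (hf : ContDiff 𝕜 n f)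
    {k : ℕ} (hk : k < n) (x : 𝕜) :
    HasDerivAt (iteratedDeriv k f) (iteratedDeriv (k + 1) f x) x := by
  rw [iteratedDeriv_succ]
  exact (hf.differentiable_iteratedDeriv k hk x).hasDerivAt

/-- With `φ r = f (r ^ 2)` one has `s * φ'' - φ' s = 4 s³ f''(s²)`. -/
theorem ConvexOn.deriv_le_mul_of_comp_sq {f φ φ' : ℝ → ℝ} {s φ'' : ℝ}
    (hf : ConvexOn ℝ (Ioi 0) f) (hfφ : ∀ r > 0, f (r ^ 2) = φ r)
    (hφ : ∀ r > 0, HasDerivAt φ (φ' r) r) (hφ' : HasDerivAt φ' φ'' s) (hs : 0 < s) :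
    φ' s ≤ s * φ'' := by
  have hf_deriv : ∀ x > 0, HasDerivAt f (φ' (√x) * (1 / (2 * √x))) x := by
    intro x hx
    have hfx : (φ ∘ sqrt) =ᶠ[nhds x] f := by
      filter_upwards [Ioi_mem_nhds hx] with y hy
      simp [← hfφ (√y) (sqrt_pos.2 hy), sq_sqrt (le_of_lt hy)]
    exact ((hφ _ (sqrt_pos.2 hx)).comp x (hasDerivAt_sqrt hx.ne')).congr_of_eventuallyEq hfx.symm
  have hmono : MonotoneOn (fun r => φ' r / (2 * r)) (Ioi 0) := by
    intro r hr r' hr' hrr'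
    have h := hf.monotoneOn_deriv (fun x hx => (hf_deriv x hx).differentiableAt)
      (mem_Ioi.2 (pow_pos hr 2)) (mem_Ioi.2 (pow_pos hr' 2)) (pow_le_pow_left₀ (le_of_lt hr) hrr' 2)
    rw [(hf_deriv _ (pow_pos hr 2)).deriv, (hf_deriv _ (pow_pos hr' 2)).deriv,
      sqrt_sq (le_of_lt hr), sqrt_sq (le_of_lt hr')] at h
    simpa [div_eq_mul_inv, mul_comm] using h
  have hD : HasDerivAt (fun r => φ' r / (2 * r)) ((φ'' * (2 * s) - φ' s * 2) / (2 * s) ^ 2) s :=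
    hφ'.div (by simpa using (hasDerivAt_id s).const_mul 2) (by positivity)
  have h := hmono.derivWithin_nonneg (x := s)
  rw [derivWithin_of_isOpen isOpen_Ioi hs, hD.deriv] at h
  have := (le_div_iff₀ (by positivity)).1 h
  linarith

theorem ConvexOn.nonneg_of_eq_div_sqrt {f g g' : ℝ → ℝ} {s g'' : ℝ}
    (hf : ConvexOn ℝ (Ioi 0) f) (hfg : ∀ x > 0, f x = g (√x) / √x)
    (hg : ∀ r > 0, HasDerivAt g (g' r) r) (hg' : HasDerivAt g' g'' s) (hs : 0 < s) :
    0 ≤ s ^ 2 * g'' - 3 * s * g' s + 3 * g s := by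
  have hφ : ∀ r > 0, HasDerivAt (fun r => g r / r) ((g' r * r - g r) / r ^ 2) r := fun r hr => by
    simpa using (hg r hr).fun_div (hasDerivAt_id' r) hr.ne'
  have hφ' : HasDerivAt (fun r => (g' r * r - g r) / r ^ 2)
      ((g'' * s * s ^ 2 - (g' s * s - g s) * (2 * s)) / (s ^ 2) ^ 2) s := by
    refine (((hg'.fun_mul (hasDerivAt_id' s)).fun_sub (hg s hs)).fun_div (hasDerivAt_pow 2 s)
      (by positivity)).congr_deriv ?_
    norm_num
  have h := hf.deriv_le_mul_of_comp_sq (fun r hr => by rw [hfg _ (by positivity), sqrt_sq hr.le])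
    hφ hφ' hs
  have hrearrange : s * ((g'' * s * s ^ 2 - (g' s * s - g s) * (2 * s)) / (s ^ 2) ^ 2)
      - (g' s * s - g s) / s ^ 2 = (s ^ 2 * g'' - 3 * s * g' s + 3 * g s) / s ^ 2 := by
    field_simp
    ring
  have := sub_nonneg.2 h
  rw [hrearrange] at this
  simpa using (le_div_iff₀ (by positivity)).1 this

theorem intervalIntegral.integral_zero_neg (f : ℝ → ℝ) (x : ℝ) :
    ∫ t in 0..-x, f t = -∫ t in 0..x, f (-t) := by
  rw [integral_comp_neg, neg_zero, integral_symm]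

theorem Continuous.exists_second_antiderivative_even {Φ : ℝ → ℝ} (hΦ : Continuous Φ)
    (heven : ∀ x, Φ (-x) = Φ x) :
    ∃ F G : ℝ → ℝ, (∀ x, HasDerivAt F (Φ x) x) ∧ (∀ x, HasDerivAt G (F x) x) ∧
      ∀ x, G (-x) = G x := by
  set F : ℝ → ℝ := fun x => ∫ t in 0..x, Φ t with hF
  have hFderiv : ∀ x, HasDerivAt F (Φ x) x := fun x =>
    (hΦ.integral_hasStrictDerivAt 0 x).hasDerivAt
  have hFc : Continuous F := continuous_iff_continuousAt.2 fun x => (hFderiv x).continuousAt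
  have hFodd : ∀ x, F (-x) = -F x := fun x => by simp [hF, integral_zero_neg, heven]
  refine ⟨F, fun x => ∫ t in 0..x, F t, hFderiv,
    fun x => (hFc.integral_hasStrictDerivAt 0 x).hasDerivAt, fun x => ?_⟩
  simp [integral_zero_neg, hFodd]

theorem integral_integral_comp_add_mul {Φ F G : ℝ → ℝ} (hΦ : Continuous Φ)
    (hF : ∀ x, HasDerivAt F (Φ x) x) (hG : ∀ x, HasDerivAt G (F x) x) {s : ℝ} (hs : s ≠ 0)
    (p q c d : ℝ) :
    ∫ v in c..d, ∫ u in p..q, Φ (u + s * v) =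
      (G (q + s * d) - G (q + s * c) - G (p + s * d) + G (p + s * c)) / s := by
  have hFc : Continuous F := continuous_iff_continuousAt.2 fun x => (hF x).continuousAt
  have hinner : ∀ v, ∫ u in p..q, Φ (u + s * v) = F (q + s * v) - F (p + s * v) := fun v =>
    integral_eq_sub_of_hasDerivAt (fun u _ => (hF (u + s * v)).comp_add_const u (s * v))
      ((hΦ.comp (continuous_add_const _)).intervalIntegrable _ _)
  have houter : ∀ v, HasDerivAt (fun v => (G (q + s * v) - G (p + s * v)) / s)
      (F (q + s * v) - F (p + s * v)) v := fun v => by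
    have hlin : ∀ r : ℝ, HasDerivAt (fun v => r + s * v) s v := fun r => by
      simpa using ((hasDerivAt_id' v).const_mul s).const_add r
    refine ((((hG _).comp v (hlin q)).fun_sub ((hG _).comp v (hlin p))).div_const s).congr_deriv ?_
    field_simp
  simp_rw [hinner]
  have hcont : Continuous fun v => F (q + s * v) - F (p + s * v) := by fun_prop
  rw [integral_eq_sub_of_hasDerivAt (fun v _ => houter v) (hcont.intervalIntegrable _ _)]
  ring

theorem sq_mul_sub_three_mul_add_three_mul_neg {ψ ψ₁ ψ₂ ψ₃ ψ₄ : ℝ → ℝ} {δ t : ℝ}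
    (hψ : ∀ t, HasDerivAt ψ (ψ₁ t) t) (hψ₁ : ∀ t, HasDerivAt ψ₁ (ψ₂ t) t)
    (hψ₂ : ∀ t, HasDerivAt ψ₂ (ψ₃ t) t) (hψ₃ : ∀ t, HasDerivAt ψ₃ (ψ₄ t) t)
    (h₀ : ψ 0 = 0) (h₂ : ψ₂ 0 = 0) (hψ₄ : ∀ t ∈ Ioo 0 δ, ψ₄ t < 0) (ht : t ∈ Ioo 0 δ) :
    t ^ 2 * ψ₂ t - 3 * t * ψ₁ t + 3 * ψ t < 0 := by
  have hR : ∀ t ∈ Ioo 0 δ, t * ψ₃ t - ψ₂ t < 0 := fun t ht =>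
    neg_of_hasDerivAt_neg (f' := fun t => t * ψ₄ t)
      (fun t => (((hasDerivAt_id' t).fun_mul (hψ₃ t)).fun_sub (hψ₂ t)).congr_deriv (by ring))
      (by simp [h₂]) (fun t ht => mul_neg_of_pos_of_neg ht.1 (hψ₄ t ht)) ht
  refine neg_of_hasDerivAt_neg (f := fun t => t ^ 2 * ψ₂ t - 3 * t * ψ₁ t + 3 * ψ t)
    (f' := fun t => t * (t * ψ₃ t - ψ₂ t)) (fun t => ?_) (by simp [h₀])
    (fun t ht => mul_neg_of_pos_of_neg ht.1 (hR t ht)) ht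
  have hsq : HasDerivAt (fun t : ℝ => t ^ 2) (2 * t) t := by simpa using hasDerivAt_pow 2 t
  have hlin : HasDerivAt (fun t : ℝ => 3 * t) 3 t := by simpa using (hasDerivAt_id' t).const_mul 3
  refine (((hsq.fun_mul (hψ₂ t)).fun_sub (hlin.fun_mul (hψ₁ t))).fun_add
    ((hψ t).const_mul 3)).congr_deriv ?_
  ring

theorem iteratedDeriv_three_nonneg_of_forall_nonneg {Φ F G : ℝ → ℝ} (hΦ : ContDiff ℝ 3 Φ)
    (hF : ∀ x, HasDerivAt F (Φ x) x) (hG : ∀ x, HasDerivAt G (F x) x) (a : ℝ)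
    (h : ∀ t > 0, 0 ≤ t ^ 2 * (Φ (a + t) - Φ (a - t)) - 3 * t * (F (a + t) + F (a - t))
      + 3 * (G (a + t) - G (a - t))) :
    0 ≤ iteratedDeriv 3 Φ a := by
  have hd : ∀ k < 3, ∀ x, HasDerivAt (iteratedDeriv k Φ) (iteratedDeriv (k + 1) Φ x) x :=
    fun k hk => hΦ.hasDerivAt_iteratedDeriv (by exact_mod_cast hk)
  have hΦ₀ : ∀ x, HasDerivAt Φ (iteratedDeriv 1 Φ x) x := by simpa using hd 0 (by norm_num)
  by_contra! hneg
  obtain ⟨δ, hδ, hΦ₂⟩ := exists_pos_forall_lt_of_deriv_neg (hd 2 (by norm_num))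
    (hΦ.continuous_iteratedDeriv 3 le_rfl).continuousAt hneg
  have hδ2 : δ / 2 ∈ Ioo 0 δ := ⟨by positivity, by linarith⟩
  have hlt := sq_mul_sub_three_mul_add_three_mul_neg (hasDerivAt_comp_add_sub_comp_sub hG a)
    (hasDerivAt_comp_add_add_comp_sub hF a) (hasDerivAt_comp_add_sub_comp_sub hΦ₀ a)
    (hasDerivAt_comp_add_add_comp_sub (hd 1 (by norm_num)) a) (by simp) (by simp)
    (fun t ht => sub_neg.2 (hΦ₂ t ht)) hδ2
  exact hlt.not_ge (h _ hδ2.1)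

/-- If `Φ` is an even `C³` function such that `h_{a,b}(x) = ∫_{-b}^b ∫_{-a}^a Φ(u + √x v) du dv`
is convex on `[0,∞)` for all `a, b > 0`, then `Φ''' ≥ 0` on `[0,∞)`. -/
theorem stmt_11 (Φ : ℝ → ℝ) (hΦ : ContDiff ℝ 3 Φ) (heven : ∀ x, Φ (-x) = Φ x)
    (hconv : ∀ a b : ℝ, 0 < a → 0 < b →
      ConvexOn ℝ (Set.Ici 0)
        (fun x => ∫ v in (-b)..b, ∫ u in (-a)..a, Φ (u + Real.sqrt x * v))) :
    ∀ x : ℝ, 0 ≤ x → 0 ≤ deriv^[3] Φ x := by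
  obtain ⟨F, G, hF, hG, hGeven⟩ := hΦ.continuous.exists_second_antiderivative_even heven
  have hpos : ∀ a > 0, 0 ≤ iteratedDeriv 3 Φ a := fun a ha =>
    iteratedDeriv_three_nonneg_of_forall_nonneg hΦ hF hG a fun t ht => by
      have hclosed : ∀ x > 0, (∫ v in (-1)..1, ∫ u in (-a)..a, Φ (u + √x * v))
          = 2 * (G (a + √x) - G (a - √x)) / √x := fun x hx => by
        rw [integral_integral_comp_add_mul hΦ.continuous hF hG (sqrt_pos.2 hx).ne',
          show -a + √x * 1 = -(a - √x) by ring, show -a + √x * -1 = -(a + √x) by ring,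
          hGeven, hGeven]
        ring_nf
      have hconv' := (hconv a 1 ha one_pos).subset (Ioi_subset_Ici le_rfl) (convex_Ioi 0)
      have := hconv'.nonneg_of_eq_div_sqrt hclosed
        (fun r _ => (hasDerivAt_comp_add_sub_comp_sub hG a r).const_mul 2)
        ((hasDerivAt_comp_add_add_comp_sub hF a t).const_mul 2) ht
      linarith
  intro x hx
  rw [← iteratedDeriv_eq_iterate]
  have hsub : Ioi 0 ⊆ {x | 0 ≤ iteratedDeriv 3 Φ x} := hpos
  exact (isClosed_le continuous_const (hΦ.continuous_iteratedDeriv 3 le_rfl)).closure_subset_iff.2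
    hsub (by rwa [closure_Ioi])
end

section
/- Let $\Phi : \mathbb{R} \to \mathbb{R}$ be an even $C^3$ function with $\Phi'''(x) \geq 0$ for $x \geq 0$. Then the function $y \mapsto \frac{\Phi(y+1) - \Phi(y-1)}{y}$ is nondecreasing on $(0,\infty)$. -/
/-!
Write `F y = Φ (y + 1) - Φ (y - 1)`, so that `F 0 = 0` by evenness and the claim says that the
slope of `F` from the origin increases. This holds as soon as `F` is convex on `[0, ∞)`, i.e. as
soon as `F'' y = Φ'' (y + 1) - Φ'' (y - 1) ≥ 0 for `y ≥ 0`. Now `Φ''` is even, and increasing on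
`[0, ∞)` because `Φ''' ≥ 0` there; since `|y - 1| ≤ y + 1`, we get
`Φ'' (y - 1) = Φ'' |y - 1| ≤ Φ'' (y + 1)`.
-/

open Set

section EvenOdd

variable {𝕜 F : Type*} [NontriviallyNormedField 𝕜] [NormedAddCommGroup F] [NormedSpace 𝕜 F]
  {f : 𝕜 → F}

theorem Function.Even.deriv_odd (hf : f.Even) : (deriv f).Odd := fun x => by
  have h := deriv_comp_neg f x
  rw [show (fun x => f (-x)) = f from funext hf] at h
  rw [h, neg_neg]

theorem Function.Odd.deriv_even (hf : f.Odd) : (deriv f).Even := fun x => by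
  simpa [hf.eq, deriv.fun_neg] using (deriv_comp_neg f x).symm

end EvenOdd

theorem Function.Even.le_of_abs_le {f : ℝ → ℝ} (hf : f.Even) (hmono : MonotoneOn f (Ici 0))
    {s t : ℝ} (hst : |s| ≤ t) : f s ≤ f t := by
  have hs : f s = f |s| := by
    rcases abs_choice s with h | h <;> rw [h]
    exact (hf s).symm
  rw [hs]
  exact hmono (abs_nonneg s) ((abs_nonneg s).trans hst) hst

theorem ConvexOn.monotoneOn_div {𝕜 : Type*} [Field 𝕜] [LinearOrder 𝕜] [IsStrictOrderedRing 𝕜]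
    {f : 𝕜 → 𝕜} (hf : ConvexOn 𝕜 (Ici 0) f) (h0 : f 0 = 0) :
    MonotoneOn (fun y => f y / y) (Ioi 0) := fun x hx y hy hxy => by
  simpa [h0] using hf.secant_mono self_mem_Ici (le_of_lt hx) (le_of_lt hy) hx.ne' hy.ne' hxy

theorem convexOn_Ici_comp_add_sub_comp_sub {g : ℝ → ℝ} (hg : ContDiff ℝ 2 g)
    (hg_even : (deriv^[2] g).Even) (hg_mono : MonotoneOn (deriv^[2] g) (Ici 0))
    {a : ℝ} (ha : 0 ≤ a) : ConvexOn ℝ (Ici 0) (fun y => g (y + a) - g (y - a)) := by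
  have hg' : Differentiable ℝ g := hg.differentiable two_ne_zero
  have hg'' : Differentiable ℝ (deriv g) := (hg.iterate_deriv' 1 1).differentiable one_ne_zero
  have hshift : ∀ h : ℝ → ℝ, Differentiable ℝ h →
      deriv (fun y => h (y + a) - h (y - a)) = fun y => deriv h (y + a) - deriv h (y - a) :=
    fun h hh => funext fun y => by
      rw [deriv_fun_sub (by fun_prop) (by fun_prop), deriv_comp_add_const, deriv_comp_sub_const]
  have hF : Differentiable ℝ (fun y => g (y + a) - g (y - a)) := by fun_prop
  refine convexOn_of_deriv2_nonneg (convex_Ici 0) hF.continuous.continuousOn hF.differentiableOn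
    (by rw [hshift g hg']; fun_prop) fun y hy => ?_
  rw [interior_Ici, mem_Ioi] at hy
  rw [Function.iterate_succ_apply, Function.iterate_one, hshift g hg', hshift _ hg'', sub_nonneg]
  exact hg_even.le_of_abs_le hg_mono (abs_le.2 ⟨by linarith, by linarith⟩)

/-- If `Φ` is an even `C³` function with `Φ''' ≥ 0` on `[0,∞)`, then
`y ↦ (Φ(y+1) - Φ(y-1))/y` is nondecreasing on `(0,∞)`. -/
theorem stmt_12 (Φ : ℝ → ℝ) (hΦ : ContDiff ℝ 3 Φ) (heven : ∀ x, Φ (-x) = Φ x)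
    (hΦ''' : ∀ x : ℝ, 0 ≤ x → 0 ≤ deriv^[3] Φ x) :
    MonotoneOn (fun y => (Φ (y + 1) - Φ (y - 1)) / y) (Set.Ioi 0) := by
  have hΦ'' : ContDiff ℝ 1 (deriv^[2] Φ) := hΦ.iterate_deriv' 1 2
  have hΦ''_mono : MonotoneOn (deriv^[2] Φ) (Ici 0) :=
    monotoneOn_of_deriv_nonneg (convex_Ici 0) hΦ''.continuous.continuousOn
      (hΦ''.differentiable one_ne_zero).differentiableOn fun x hx =>
        hΦ''' x (interior_subset hx)
  have hF := convexOn_Ici_comp_add_sub_comp_sub (hΦ.of_le (by norm_num))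
    (Function.Even.deriv_odd heven).deriv_even hΦ''_mono zero_le_one
  exact hF.monotoneOn_div (by simp [heven 1])
end

section
/- Let $f : \mathbb{R} \to [0,\infty)$ be an even log-concave function with $f(0) = 1$, and let $p, q$ be real numbers with $-1 < p < q$. Then $\left(\int_0^\infty f(t)\, t^p\, dt\right)^{\frac{1}{p+1}} \leq C_{p,q} \left(\int_0^\infty f(t)\, t^q\, dt\right)^{\frac{1}{q+1}}$, where $C_{p,q} = \max\left\{ \frac{(q+1)^{1/(q+1)}}{(p+1)^{1/(p+1)}},\ \frac{\Gamma(p+1)^{1/(p+1)}}{\Gamma(q+1)^{1/(q+1)}} \right\}$. -/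
/-!
An even log-concave `f` with `f 0 = 1` satisfies `0 ≤ f ≤ 1`, and for such weights the moments
`∫₀^∞ f t ^ r dt` are compared by a bathtub argument. Choose `a` with `∫₀^a t ^ q = ∫₀^∞ f t ^ q`;
then the mass `∫_a^∞ f t ^ q` equals the deficit `∫₀^a (1 - f) t ^ q`. Multiplying by `t ^ (p - q)`,
which is `≤ a ^ (p - q)` beyond `a` and `≥ a ^ (p - q)` before `a`, gives
`∫₀^∞ f t ^ p ≤ ∫₀^a t ^ p = a ^ (p + 1) / (p + 1)`, which is the claim with the first constant.
-/

open Real Set MeasureTheory ENNReal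

def IsLogConcave {E : Type*} [AddCommGroup E] [Module ℝ E] (f : E → ℝ) : Prop :=
  ∀ x y : E, ∀ l : ℝ, 0 ≤ l → l ≤ 1 → f x ^ l * f y ^ (1 - l) ≤ f (l • x + (1 - l) • y)

namespace IsLogConcave

variable {E : Type*} [NormedAddCommGroup E] [NormedSpace ℝ E] {f : E → ℝ}

lemma rpow_mul_rpow_le (hf : IsLogConcave f) (x y : E) {a b : ℝ} (ha : 0 ≤ a) (hb : 0 ≤ b)
    (hab : a + b = 1) : f x ^ a * f y ^ b ≤ f (a • x + b • y) := by
  obtain rfl : b = 1 - a := by linarith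
  exact hf x y a ha (by linarith)

lemma le_apply_zero_of_even (hf : IsLogConcave f) (hf0 : ∀ x, 0 ≤ f x)
    (heven : ∀ x, f (-x) = f x) (x : E) : f x ≤ f 0 := by
  rcases (hf0 x).eq_or_lt with hx | hx
  · exact hx ▸ hf0 0
  · have hmid := hf x (-x) (1 / 2) (by norm_num) (by norm_num)
    rwa [heven, ← rpow_add hx, smul_neg, ← sub_eq_add_neg, show (1 : ℝ) - 1 / 2 = 1 / 2 by norm_num,
      sub_self, add_halves, Real.rpow_one] at hmid

lemma convex_support (hf : IsLogConcave f) : Convex ℝ {x | 0 < f x} :=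
  fun x hx y hy a b ha hb hab =>
    (mul_pos (rpow_pos_of_pos hx a) (rpow_pos_of_pos hy b)).trans_le
      (hf.rpow_mul_rpow_le x y ha hb hab)

lemma concaveOn_log (hf : IsLogConcave f) : ConcaveOn ℝ {x | 0 < f x} (fun x => log (f x)) := by
  refine ⟨hf.convex_support, fun x (hx : 0 < f x) y (hy : 0 < f y) a b ha hb hab => ?_⟩
  calc a • log (f x) + b • log (f y) = log (f x ^ a * f y ^ b) := by
        rw [log_mul (rpow_pos_of_pos hx a).ne' (rpow_pos_of_pos hy b).ne', log_rpow hx,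
          log_rpow hy, smul_eq_mul, smul_eq_mul]
    _ ≤ log (f (a • x + b • y)) :=
        log_le_log (mul_pos (rpow_pos_of_pos hx a) (rpow_pos_of_pos hy b))
          (hf.rpow_mul_rpow_le x y ha hb hab)

/-- `f` is continuous on the interior of its convex support, vanishes off the support, and the
frontier of a convex set is null. -/
lemma aemeasurable [FiniteDimensional ℝ E] [MeasurableSpace E] [BorelSpace E] (μ : Measure E)
    [μ.IsAddHaarMeasure] (hf : IsLogConcave f) (hf0 : ∀ x, 0 ≤ f x) : AEMeasurable f μ := by
  set S := {x | 0 < f x}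
  have hcont : ContinuousOn f (interior S) :=
    hf.concaveOn_log.continuousOn_interior.rexp.congr fun x hx =>
      (exp_log (interior_subset (s := S) hx)).symm
  have hind : AEMeasurable ((interior S).indicator f) μ :=
    (aemeasurable_indicator_iff isOpen_interior.measurableSet).2
      (hcont.aemeasurable isOpen_interior.measurableSet)
  refine hind.congr ?_
  filter_upwards [measure_eq_zero_iff_ae_notMem.1 (hf.convex_support.addHaar_frontier μ)]
    with x hx
  by_cases hxi : x ∈ interior S
  · exact indicator_of_mem hxi f
  · have hxS : ¬ 0 < f x := fun hxS => hx ⟨subset_closure hxS, hxi⟩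
    rw [indicator_of_notMem hxi]
    exact (le_antisymm (not_lt.1 hxS) (hf0 x)).symm

end IsLogConcave

lemma lintegral_Ioc_rpow {a r : ℝ} (ha : 0 ≤ a) (hr : -1 < r) :
    ∫⁻ t in Ioc 0 a, ENNReal.ofReal (t ^ r) = ENNReal.ofReal (a ^ (r + 1) / (r + 1)) := by
  have hint : IntegrableOn (fun t : ℝ => t ^ r) (Ioc 0 a) :=
    (intervalIntegrable_iff_integrableOn_Ioc_of_le ha).1
      (intervalIntegral.intervalIntegrable_rpow' hr)
  rw [← ofReal_integral_eq_lintegral_ofReal hint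
    (ae_restrict_of_forall_mem measurableSet_Ioc fun t ht => rpow_nonneg ht.1.le r),
    ← intervalIntegral.integral_of_le ha, integral_rpow (Or.inl hr),
    Real.zero_rpow (by linarith : r + 1 ≠ 0), sub_zero]

lemma lintegral_Ioi_eq_Ioc_add_Ioi {a b : ℝ} (hab : a ≤ b) (h : ℝ → ℝ≥0∞) :
    ∫⁻ t in Ioi a, h t = (∫⁻ t in Ioc a b, h t) + ∫⁻ t in Ioi b, h t := by
  rw [← Ioc_union_Ioi_eq_Ioi hab, lintegral_union measurableSet_Ioi (Ioc_disjoint_Ioi le_rfl)]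

lemma lintegral_ofReal_const_mul {α : Type*} [MeasurableSpace α] {μ : Measure α} {c : ℝ}
    (hc : 0 ≤ c) (v : α → ℝ) :
    ∫⁻ x, ENNReal.ofReal (c * v x) ∂μ = ENNReal.ofReal c * ∫⁻ x, ENNReal.ofReal (v x) ∂μ := by
  simp_rw [ENNReal.ofReal_mul hc]
  exact lintegral_const_mul' _ _ ofReal_ne_top

lemma rpow_eq_rpow_sub_mul_rpow {t : ℝ} (ht : 0 < t) (p q : ℝ) : t ^ p = t ^ (p - q) * t ^ q := by
  rw [← rpow_add ht, sub_add_cancel]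

lemma lintegral_Ioc_mul_rpow_add_one_sub {g : ℝ → ℝ} {a r : ℝ}
    (hg : AEMeasurable g (volume.restrict (Ioc 0 a))) (hg0 : ∀ t ∈ Ioc 0 a, 0 ≤ g t)
    (hg1 : ∀ t ∈ Ioc 0 a, g t ≤ 1) (ha : 0 ≤ a) (hr : -1 < r) :
    (∫⁻ t in Ioc 0 a, ENNReal.ofReal (g t * t ^ r))
      + ∫⁻ t in Ioc 0 a, ENNReal.ofReal ((1 - g t) * t ^ r)
      = ENNReal.ofReal (a ^ (r + 1) / (r + 1)) := by
  have hmeas : AEMeasurable (fun t => ENNReal.ofReal (g t * t ^ r)) (volume.restrict (Ioc 0 a)) :=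
    (hg.mul (by fun_prop)).ennreal_ofReal
  rw [← lintegral_Ioc_rpow ha hr, ← lintegral_add_left' hmeas]
  refine setLIntegral_congr_fun measurableSet_Ioc fun t ht => ?_
  have htr : 0 ≤ t ^ r := rpow_nonneg ht.1.le r
  rw [← ENNReal.ofReal_add (mul_nonneg (hg0 t ht) htr)
    (mul_nonneg (sub_nonneg.2 (hg1 t ht)) htr), ← add_mul, add_sub_cancel, one_mul]

lemma lintegral_mul_rpow_le_of_le_one {g : ℝ → ℝ} (hg : AEMeasurable g (volume.restrict (Ioi 0)))
    (hg0 : ∀ t ∈ Ioi (0 : ℝ), 0 ≤ g t) (hg1 : ∀ t ∈ Ioi (0 : ℝ), g t ≤ 1) {p q a : ℝ}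
    (hp : -1 < p) (hpq : p < q) (ha : 0 < a)
    (hI : ∫⁻ t in Ioi 0, ENNReal.ofReal (g t * t ^ q) ≤ ENNReal.ofReal (a ^ (q + 1) / (q + 1))) :
    ∫⁻ t in Ioi 0, ENNReal.ofReal (g t * t ^ p) ≤ ENNReal.ofReal (a ^ (p + 1) / (p + 1)) := by
  have hsub : Ioc 0 a ⊆ Ioi 0 := Ioc_subset_Ioi_self
  have hsplit {r : ℝ} (hr : -1 < r) :=
    lintegral_Ioc_mul_rpow_add_one_sub (hg.mono_measure (Measure.restrict_mono hsub le_rfl))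
      (fun t ht => hg0 t (hsub ht)) (fun t ht => hg1 t (hsub ht)) ha.le hr
  have hk : 0 ≤ a ^ (p - q) := rpow_nonneg ha.le _
  have hmass_q : ∫⁻ t in Ioi a, ENNReal.ofReal (g t * t ^ q)
      ≤ ∫⁻ t in Ioc 0 a, ENNReal.ofReal ((1 - g t) * t ^ q) := by
    have hq := hsplit (hp.trans hpq)
    rw [lintegral_Ioi_eq_Ioc_add_Ioi ha.le, ← hq] at hI
    exact ENNReal.le_of_add_le_add_left (ne_top_of_le_ne_top ofReal_ne_top (hq ▸ le_self_add)) hI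
  have hmass_p : ∫⁻ t in Ioi a, ENNReal.ofReal (g t * t ^ p)
      ≤ ENNReal.ofReal (a ^ (p - q)) * ∫⁻ t in Ioi a, ENNReal.ofReal (g t * t ^ q) := by
    rw [← lintegral_ofReal_const_mul hk]
    refine setLIntegral_mono' measurableSet_Ioi fun t ht => ofReal_le_ofReal ?_
    have ht0 : 0 < t := ha.trans ht
    rw [rpow_eq_rpow_sub_mul_rpow ht0 p q, mul_left_comm]
    exact mul_le_mul_of_nonneg_right (rpow_le_rpow_of_nonpos ha ht.le (by linarith))
      (mul_nonneg (hg0 t ht0) (rpow_nonneg ht0.le q))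
  have hdeficit : ENNReal.ofReal (a ^ (p - q)) * ∫⁻ t in Ioc 0 a, ENNReal.ofReal ((1 - g t) * t ^ q)
      ≤ ∫⁻ t in Ioc 0 a, ENNReal.ofReal ((1 - g t) * t ^ p) := by
    rw [← lintegral_ofReal_const_mul hk]
    refine setLIntegral_mono' measurableSet_Ioc fun t ht => ofReal_le_ofReal ?_
    rw [rpow_eq_rpow_sub_mul_rpow ht.1 p q, mul_left_comm (1 - g t)]
    exact mul_le_mul_of_nonneg_right (rpow_le_rpow_of_nonpos ht.1 ht.2 (by linarith))
      (mul_nonneg (sub_nonneg.2 (hg1 t (hsub ht))) (rpow_nonneg ht.1.le q))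
  calc ∫⁻ t in Ioi 0, ENNReal.ofReal (g t * t ^ p)
      = (∫⁻ t in Ioc 0 a, ENNReal.ofReal (g t * t ^ p))
          + ∫⁻ t in Ioi a, ENNReal.ofReal (g t * t ^ p) := lintegral_Ioi_eq_Ioc_add_Ioi ha.le _
    _ ≤ (∫⁻ t in Ioc 0 a, ENNReal.ofReal (g t * t ^ p))
          + ∫⁻ t in Ioc 0 a, ENNReal.ofReal ((1 - g t) * t ^ p) :=
        add_le_add le_rfl (hmass_p.trans (le_trans (by gcongr) hdeficit))
    _ = ENNReal.ofReal (a ^ (p + 1) / (p + 1)) := hsplit hp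

lemma lintegral_mul_rpow_eq_zero {g : ℝ → ℝ} (hg : AEMeasurable g (volume.restrict (Ioi 0)))
    (p q : ℝ) (h : ∫⁻ t in Ioi 0, ENNReal.ofReal (g t * t ^ q) = 0) :
    ∫⁻ t in Ioi 0, ENNReal.ofReal (g t * t ^ p) = 0 := by
  have hmeas : AEMeasurable (fun t => ENNReal.ofReal (g t * t ^ q)) (volume.restrict (Ioi 0)) :=
    (hg.mul (by fun_prop)).ennreal_ofReal
  refine (lintegral_congr_ae ?_).trans lintegral_zero
  filter_upwards [(lintegral_eq_zero_iff' hmeas).1 h, ae_restrict_mem measurableSet_Ioi]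
    with t hqt (ht : 0 < t)
  have hgt : g t ≤ 0 := nonpos_of_mul_nonpos_left (ofReal_eq_zero.1 hqt) (rpow_pos_of_pos ht q)
  exact ofReal_eq_zero.2 (mul_nonpos_of_nonpos_of_nonneg hgt (rpow_nonneg ht.le p))

theorem lintegral_mul_rpow_rpow_le_of_le_one {g : ℝ → ℝ}
    (hg : AEMeasurable g (volume.restrict (Ioi 0))) (hg0 : ∀ t ∈ Ioi (0 : ℝ), 0 ≤ g t)
    (hg1 : ∀ t ∈ Ioi (0 : ℝ), g t ≤ 1) {p q : ℝ} (hp : -1 < p) (hpq : p < q) :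
    (∫⁻ t in Ioi 0, ENNReal.ofReal (g t * t ^ p)) ^ (1 / (p + 1)) ≤
      ENNReal.ofReal ((q + 1) ^ (1 / (q + 1)) / (p + 1) ^ (1 / (p + 1))) *
      (∫⁻ t in Ioi 0, ENNReal.ofReal (g t * t ^ q)) ^ (1 / (q + 1)) := by
  have hp1 : 0 < p + 1 := by linarith
  have hq1 : 0 < q + 1 := by linarith
  have hc : 0 < (q + 1) ^ (1 / (q + 1)) / (p + 1) ^ (1 / (p + 1)) := by positivity
  set Iq := ∫⁻ t in Ioi 0, ENNReal.ofReal (g t * t ^ q)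
  rcases eq_top_or_lt_top Iq with htop | hfin
  · rw [htop, top_rpow_of_pos (by positivity), mul_top (ofReal_pos.2 hc).ne']
    exact le_top
  rcases eq_or_ne Iq 0 with h0 | hne
  · rw [lintegral_mul_rpow_eq_zero hg p q h0, zero_rpow_of_pos (by positivity)]
    exact zero_le
  set m := Iq.toReal
  have hm : 0 < m := toReal_pos hne hfin.ne
  set a := ((q + 1) * m) ^ (1 / (q + 1)) with ha_def
  have ha : 0 < a := by positivity
  have haq : a ^ (q + 1) / (q + 1) = m := by
    rw [ha_def, ← Real.rpow_mul (by positivity), one_div_mul_cancel hq1.ne', Real.rpow_one,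
      mul_div_cancel_left₀ _ hq1.ne']
  have hIp := lintegral_mul_rpow_le_of_le_one hg hg0 hg1 hp hpq ha
    (by rw [haq, ofReal_toReal hfin.ne])
  calc (∫⁻ t in Ioi 0, ENNReal.ofReal (g t * t ^ p)) ^ (1 / (p + 1))
      ≤ ENNReal.ofReal (a ^ (p + 1) / (p + 1)) ^ (1 / (p + 1)) := rpow_le_rpow hIp (by positivity)
    _ = ENNReal.ofReal ((q + 1) ^ (1 / (q + 1)) / (p + 1) ^ (1 / (p + 1)) * m ^ (1 / (q + 1))) := by
        rw [ofReal_rpow_of_nonneg (by positivity) (by positivity), div_rpow (by positivity) hp1.le,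
          ← Real.rpow_mul ha.le, mul_one_div_cancel hp1.ne', Real.rpow_one, ha_def,
          mul_rpow hq1.le hm.le]
        ring_nf
    _ = _ := by
        rw [ofReal_mul hc.le, ← ofReal_rpow_of_nonneg toReal_nonneg (by positivity),
          ofReal_toReal hfin.ne]

/-- Moment comparison for even log-concave functions with `f(0)=1`:
`(∫_0^∞ f t^p)^{1/(p+1)} ≤ C_{p,q} (∫_0^∞ f t^q)^{1/(q+1)}` for `-1 < p < q`. -/
theorem stmt_14 (f : ℝ → ℝ) (hf0 : ∀ x, 0 ≤ f x) (hf1 : f 0 = 1)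
    (heven : ∀ x, f (-x) = f x)
    (hlc : ∀ x y : ℝ, ∀ l : ℝ, 0 ≤ l → l ≤ 1 →
      (f x) ^ l * (f y) ^ (1 - l) ≤ f (l * x + (1 - l) * y))
    (p q : ℝ) (hp : -1 < p) (hpq : p < q) :
    (∫⁻ t in Set.Ioi (0:ℝ), ENNReal.ofReal (f t * t ^ p)) ^ (1/(p+1)) ≤
      ENNReal.ofReal (max ((q+1) ^ (1/(q+1)) / (p+1) ^ (1/(p+1)))
        (Real.Gamma (p+1) ^ (1/(p+1)) / Real.Gamma (q+1) ^ (1/(q+1)))) *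
      (∫⁻ t in Set.Ioi (0:ℝ), ENNReal.ofReal (f t * t ^ q)) ^ (1/(q+1)) := by
  have hf : IsLogConcave f := hlc
  have hf_le_one (t : ℝ) : f t ≤ 1 := hf1 ▸ hf.le_apply_zero_of_even hf0 heven t
  calc _ ≤ ENNReal.ofReal ((q + 1) ^ (1 / (q + 1)) / (p + 1) ^ (1 / (p + 1))) *
        (∫⁻ t in Ioi 0, ENNReal.ofReal (f t * t ^ q)) ^ (1 / (q + 1)) :=
        lintegral_mul_rpow_rpow_le_of_le_one (hf.aemeasurable volume hf0).restrict
          (fun t _ => hf0 t) (fun t _ => hf_le_one t) hp hpq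
    _ ≤ _ := by gcongr; exact le_max_left _ _
end
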